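/- arXiv:2012.07015 — 9 statements merged into one kernel-verified Lean document; each statement's English description precedes it below -/
import Mathlib

section
/- For every X ∈ 𝔪 and Z ∈ 𝔨 one has ⁅Z + X, A(X)⁆ ∈ 𝔨 if and only if ⁅Z + X, A(X)⁆ = 0. Consequently, the condition 'for every X ∈ 𝔪 there exists Z ∈ 𝔨 with ⁅Z + X, A(X)⁆ ∈ 𝔨' is equivalent to the condition 'for every X ∈ 𝔪 there exists Z ∈ 𝔨 with ⁅Z + X, A(X)⁆ = 0'. -/
/-- In the setting of a finite-dimensional real semisimple Lie algebra `g`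
with Killing form `B`, a Lie subalgebra `k`, its `B`-orthogonal complement `m`
(with `g = k ⊕ m`), and a metric endomorphism `A`: for every `X ∈ m` and `Z ∈ k` one has
`⁅Z + X, A X⁆ ∈ k ↔ ⁅Z + X, A X⁆ = 0`; consequently the GO condition with `∈ k` is
equivalent to the GO condition with `= 0`. -/
theorem statement1
    {g : Type*} [LieRing g] [LieAlgebra ℝ g] [Module.Finite ℝ g]
    [LieAlgebra.IsSemisimple ℝ g]
    (k : LieSubalgebra ℝ g)
    (m : Submodule ℝ g)
    (hm : ∀ X : g, X ∈ m ↔ ∀ Z ∈ k, killingForm ℝ g X Z = 0)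
    (hcompl : IsCompl k.toSubmodule m)
    (A : g →ₗ[ℝ] g)
    (hAm : ∀ X ∈ m, A X ∈ m)
    (hequiv : ∀ Z ∈ k, ∀ X ∈ m, A ⁅Z, X⁆ = ⁅Z, A X⁆)
    (hsymm : ∀ X ∈ m, ∀ Y ∈ m, killingForm ℝ g (A X) Y = killingForm ℝ g X (A Y)) :
    (∀ X ∈ m, ∀ Z ∈ k, (⁅Z + X, A X⁆ ∈ k ↔ ⁅Z + X, A X⁆ = 0)) ∧
      ((∀ X ∈ m, ∃ Z ∈ k, ⁅Z + X, A X⁆ ∈ k) ↔ (∀ X ∈ m, ∃ Z ∈ k, ⁅Z + X, A X⁆ = 0)) := by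
  -- [k, m] ⊆ m
  have hkm : ∀ W ∈ k, ∀ X ∈ m, ⁅W, X⁆ ∈ m := by
    intro W hW X hX
    rw [hm]
    intro W' hW'
    rw [LieModule.traceForm_apply_lie_apply' ℝ g g W X W', (hm X).mp hX ⁅W, W'⁆ (k.lie_mem hW hW'),
      neg_zero]
  have key : ∀ X ∈ m, ∀ Z ∈ k, ⁅Z + X, A X⁆ ∈ m := by
    intro X hX Z hZ
    rw [hm]
    intro W hW
    have hAX : A X ∈ m := hAm X hX
    rw [add_lie, map_add, LinearMap.add_apply]
    -- first term: B(⁅Z, A X⁆, W) = -B(A X, ⁅Z, W⁆) = 0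
    have h1 : killingForm ℝ g ⁅Z, A X⁆ W = 0 := by
      rw [LieModule.traceForm_apply_lie_apply' ℝ g g Z (A X) W,
        (hm (A X)).mp hAX ⁅Z, W⁆ (k.lie_mem hZ hW), neg_zero]
    -- second term: s := B(⁅X, A X⁆, W) satisfies s = -s
    have h2 : killingForm ℝ g ⁅X, A X⁆ W = 0 := by
      have c1 : killingForm ℝ g ⁅X, A X⁆ W = killingForm ℝ g (A X) ⁅W, X⁆ := by
        rw [LieModule.traceForm_apply_lie_apply' ℝ g g X (A X) W, ← lie_skew W X, map_neg]
      have c2 : killingForm ℝ g (A X) ⁅W, X⁆ = - killingForm ℝ g (A X) ⁅W, X⁆ := by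
        conv_lhs => rw [LieModule.traceForm_comm ℝ g g,
          LieModule.traceForm_apply_lie_apply' ℝ g g W X (A X)]
        rw [← hequiv W hW X hX, ← hsymm X hX ⁅W, X⁆ (hkm W hW X hX)]
      have : killingForm ℝ g (A X) ⁅W, X⁆ = 0 := by linarith
      rw [c1, this]
    rw [h1, h2, add_zero]
  have main : ∀ X ∈ m, ∀ Z ∈ k, (⁅Z + X, A X⁆ ∈ k ↔ ⁅Z + X, A X⁆ = 0) := by
    intro X hX Z hZ
    constructor
    · intro h
      exact (Submodule.disjoint_def.mp hcompl.disjoint) _ h (key X hX Z hZ)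
    · intro h; rw [h]; exact k.zero_mem
  refine ⟨main, ?_⟩
  constructor
  · intro h X hX
    obtain ⟨Z, hZ, hZk⟩ := h X hX
    exact ⟨Z, hZ, (main X hX Z hZ).mp hZk⟩
  · intro h X hX
    obtain ⟨Z, hZ, hZ0⟩ := h X hX
    exact ⟨Z, hZ, (main X hX Z hZ).mpr hZ0⟩
end

section
/- The pair (x, y) satisfies the GO condition if and only if for every K₀ ∈ 𝔨, P₁ ∈ 𝔭₁ and P₂ ∈ 𝔭₂ there exists Z ∈ 𝔨 such that (1) ⁅Z, K₀⁆ = 0, (2) ⁅f₁(Z), P₁⁆ = ((1 − x)/x) · ⁅f₁(K₀), P₁⁆ in 𝔤₁, and (3) ⁅f₂(Z), P₂⁆ = (c₂(y − 1)/(c₁ y)) · ⁅f₂(K₀), P₂⁆ in 𝔤₂. -/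
/-!
Write `X = (t₁ • f₁ K₀ + P₁, t₂ • f₂ K₀ + P₂)` with `t₁ = 1`, `t₂ = -(c₂/c₁)`. Since `𝔭ᵢ` is
`fᵢ(𝔨)`-invariant, each component of `⁅Z̄ + X, A X⁆` splits as `fᵢ(tᵢ • ⁅Z, K₀⁆)` plus an element
of `𝔭ᵢ`. As `fᵢ(𝔨) ∩ 𝔭ᵢ = 0` and `fᵢ` is injective, the pair lies in `𝔥 = {(f₁ W, f₂ W)}`
exactly when both `𝔭ᵢ`-parts vanish, which are conditions (2) and (3), and
`W = ⁅Z, K₀⁆ = t₂ • ⁅Z, K₀⁆`; the latter forces `⁅Z, K₀⁆ = 0` because `t₂ < 0`.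
-/

section

variable {R k g : Type*} [CommRing R] [LieRing k] [LieAlgebra R k] [LieRing g] [LieAlgebra R g]

theorem LieHom.lie_add_smul_add_smul_eq (f : k →ₗ⁅R⁆ g) (Z K : k) (P : g) (t s : R) :
    ⁅f Z + (t • f K + P), t • f K + s • P⁆
      = f (t • ⁅Z, K⁆) + (s • ⁅f Z, P⁆ + (t * (s - 1)) • ⁅f K, P⁆) := by
  simp only [lie_add, add_lie, lie_smul, smul_lie, lie_self, LieHom.map_lie, map_smul, smul_zero,
    ← lie_skew P (f K)]
  module

theorem LieHom.map_add_eq_map_iff {f : k →ₗ⁅R⁆ g} {p : Submodule R g}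
    (hint : ∀ Z : k, f Z ∈ p → Z = 0) {A W : k} {Q : g} (hQ : Q ∈ p) :
    f A + Q = f W ↔ W = A ∧ Q = 0 := by
  refine ⟨fun h ↦ ?_, fun ⟨hW, hQ⟩ ↦ by rw [hW, hQ, add_zero]⟩
  have hWA : f (W - A) = Q := by rw [map_sub, ← h, add_sub_cancel_left]
  have hW : W = A := sub_eq_zero.mp (hint _ (hWA ▸ hQ))
  exact ⟨hW, by rw [← hWA, hW, sub_self, map_zero]⟩

end

theorem LieHom.lie_add_smul_add_smul_eq_map_iff {R k g : Type*} [Field R] [LieRing k]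
    [LieAlgebra R k] [LieRing g] [LieAlgebra R g] {f : k →ₗ⁅R⁆ g} {p : Submodule R g}
    (hint : ∀ Z : k, f Z ∈ p → Z = 0) (hlie : ∀ Z : k, ∀ P ∈ p, ⁅f Z, P⁆ ∈ p)
    {P : g} (hP : P ∈ p) (Z K W : k) (t : R) {s : R} (hs : s ≠ 0) :
    ⁅f Z + (t • f K + P), t • f K + s • P⁆ = f W ↔
      W = t • ⁅Z, K⁆ ∧ ⁅f Z, P⁆ = (t * (1 - s) / s) • ⁅f K, P⁆ := by
  have hQ : s • ⁅f Z, P⁆ + (t * (s - 1)) • ⁅f K, P⁆ ∈ p :=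
    p.add_mem (p.smul_mem _ (hlie Z P hP)) (p.smul_mem _ (hlie K P hP))
  rw [f.lie_add_smul_add_smul_eq, f.map_add_eq_map_iff hint hQ, div_eq_inv_mul, mul_smul s⁻¹,
    eq_inv_smul_iff₀ hs, add_eq_zero_iff_eq_neg, ← neg_smul, neg_mul_eq_mul_neg, neg_sub]

theorem self_eq_smul_iff_eq_zero {R M : Type*} [Ring R] [IsDomain R] [AddCommGroup M]
    [Module R M] [Module.IsTorsionFree R M] {r : R} (hr : r ≠ 1) {v : M} :
    v = r • v ↔ v = 0 := by
  have hsub : v - r • v = (1 - r) • v := by rw [sub_smul, one_smul]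
  rw [← sub_eq_zero, hsub, smul_eq_zero_iff_right (sub_ne_zero.2 hr.symm)]

theorem statement2_general
    {k g1 g2 : Type*}
    [LieRing k] [LieAlgebra ℝ k]
    [LieRing g1] [LieAlgebra ℝ g1]
    [LieRing g2] [LieAlgebra ℝ g2]
    (f1 : k →ₗ⁅ℝ⁆ g1) (f2 : k →ₗ⁅ℝ⁆ g2)
    (c1 c2 : ℝ) (hc1 : 0 < c1) (hc2 : 0 < c2)
    (p1 : Submodule ℝ g1)
    (p2 : Submodule ℝ g2)
    (hint1 : ∀ Z : k, f1 Z ∈ p1 → Z = 0)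
    (hint2 : ∀ Z : k, f2 Z ∈ p2 → Z = 0)
    (hlie1 : ∀ Z : k, ∀ P ∈ p1, ⁅f1 Z, P⁆ ∈ p1)
    (hlie2 : ∀ Z : k, ∀ P ∈ p2, ⁅f2 Z, P⁆ ∈ p2)
    (x y : ℝ) (hx : 0 < x) (hy : 0 < y) :
    (∀ (K0 : k), ∀ P1 ∈ p1, ∀ P2 ∈ p2, ∃ Z W : k,
        ⁅f1 Z + (f1 K0 + P1), f1 K0 + x • P1⁆ = f1 W ∧
        ⁅f2 Z + (-(c2 / c1) • f2 K0 + P2), -(c2 / c1) • f2 K0 + y • P2⁆ = f2 W) ↔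
    (∀ (K0 : k), ∀ P1 ∈ p1, ∀ P2 ∈ p2, ∃ Z : k,
        ⁅Z, K0⁆ = 0 ∧
        ⁅f1 Z, P1⁆ = ((1 - x) / x) • ⁅f1 K0, P1⁆ ∧
        ⁅f2 Z, P2⁆ = (c2 * (y - 1) / (c1 * y)) • ⁅f2 K0, P2⁆) := by
  have hcoeff : -(c2 / c1) * (1 - y) / y = c2 * (y - 1) / (c1 * y) := by
    field_simp
    ring
  have first (K0 Z W : k) {P1 : g1} (hP1 : P1 ∈ p1) :
      ⁅f1 Z + (f1 K0 + P1), f1 K0 + x • P1⁆ = f1 W ↔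
        W = ⁅Z, K0⁆ ∧ ⁅f1 Z, P1⁆ = ((1 - x) / x) • ⁅f1 K0, P1⁆ := by
    simpa only [one_smul, one_mul] using
      f1.lie_add_smul_add_smul_eq_map_iff hint1 hlie1 hP1 Z K0 W 1 hx.ne'
  have second (K0 Z W : k) {P2 : g2} (hP2 : P2 ∈ p2) :
      ⁅f2 Z + (-(c2 / c1) • f2 K0 + P2), -(c2 / c1) • f2 K0 + y • P2⁆ = f2 W ↔
        W = -(c2 / c1) • ⁅Z, K0⁆ ∧
          ⁅f2 Z, P2⁆ = (c2 * (y - 1) / (c1 * y)) • ⁅f2 K0, P2⁆ := by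
    simpa only [hcoeff] using
      f2.lie_add_smul_add_smul_eq_map_iff hint2 hlie2 hP2 Z K0 W (-(c2 / c1)) hy.ne'
  refine forall_congr' fun K0 ↦ forall₂_congr fun P1 hP1 ↦ forall₂_congr fun P2 hP2 ↦
    exists_congr fun Z ↦ ?_
  have hratio : -(c2 / c1) ≠ 1 := ne_of_lt (by linarith [div_pos hc2 hc1])
  simp only [first K0 Z _ hP1, second K0 Z _ hP2]
  constructor
  · rintro ⟨W, ⟨rfl, h1⟩, hW, h2⟩
    exact ⟨(self_eq_smul_iff_eq_zero hratio).1 hW, h1, h2⟩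
  · rintro ⟨hZK, h1, h2⟩
    exact ⟨0, ⟨hZK.symm, h1⟩, by rw [hZK, smul_zero], h2⟩

/-- With `𝔤 = 𝔤₁ ⊕ 𝔤₂`, `𝔥 = Δf(𝔨)`, `𝔪 = 𝔪₀ ⊕ 𝔪₁ ⊕ 𝔪₂` and the metric
endomorphism `A = id ⊕ x·id ⊕ y·id`, the pair `(x, y)` satisfies the GO condition
(for every `X ∈ 𝔪` there is `Z̄ ∈ 𝔥` with `⁅Z̄ + X, A X⁆ ∈ 𝔥`) iff for every
`K₀ ∈ 𝔨`, `P₁ ∈ 𝔭₁`, `P₂ ∈ 𝔭₂` there is `Z ∈ 𝔨` with `⁅Z, K₀⁆ = 0`,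
`⁅f₁ Z, P₁⁆ = ((1 − x)/x)•⁅f₁ K₀, P₁⁆` and `⁅f₂ Z, P₂⁆ = (c₂(y − 1)/(c₁ y))•⁅f₂ K₀, P₂⁆`.
(Elements of `𝔪` are written via the parametrization
`X = (f₁ K₀ + P₁, −(c₂/c₁)·f₂ K₀ + P₂)`, and membership of a pair `(a, b)` in `𝔥` means
`∃ W, a = f₁ W ∧ b = f₂ W`; brackets in `𝔤₁ ⊕ 𝔤₂` are taken componentwise.) -/
theorem statement2
    {k g1 g2 : Type*}
    [LieRing k] [LieAlgebra ℝ k] [Module.Finite ℝ k] [LieAlgebra.IsSemisimple ℝ k]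
    [LieRing g1] [LieAlgebra ℝ g1] [Module.Finite ℝ g1] [LieAlgebra.IsSemisimple ℝ g1]
    [LieRing g2] [LieAlgebra ℝ g2] [Module.Finite ℝ g2] [LieAlgebra.IsSemisimple ℝ g2]
    (f1 : k →ₗ⁅ℝ⁆ g1) (f2 : k →ₗ⁅ℝ⁆ g2)
    (hf1 : Function.Injective f1) (hf2 : Function.Injective f2)
    (c1 c2 : ℝ) (hc1 : 0 < c1) (hc2 : 0 < c2)
    (hB1 : ∀ Z W : k, killingForm ℝ k Z W = c1 * killingForm ℝ g1 (f1 Z) (f1 W))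
    (hB2 : ∀ Z W : k, killingForm ℝ k Z W = c2 * killingForm ℝ g2 (f2 Z) (f2 W))
    (p1 : Submodule ℝ g1) (hp1 : ∀ P : g1, P ∈ p1 ↔ ∀ Z : k, killingForm ℝ g1 P (f1 Z) = 0)
    (p2 : Submodule ℝ g2) (hp2 : ∀ P : g2, P ∈ p2 ↔ ∀ Z : k, killingForm ℝ g2 P (f2 Z) = 0)
    (hsum1 : ∀ a : g1, ∃ Z : k, a - f1 Z ∈ p1)
    (hsum2 : ∀ a : g2, ∃ Z : k, a - f2 Z ∈ p2)
    (hint1 : ∀ Z : k, f1 Z ∈ p1 → Z = 0)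
    (hint2 : ∀ Z : k, f2 Z ∈ p2 → Z = 0)
    (hlie1 : ∀ Z : k, ∀ P ∈ p1, ⁅f1 Z, P⁆ ∈ p1)
    (hlie2 : ∀ Z : k, ∀ P ∈ p2, ⁅f2 Z, P⁆ ∈ p2)
    (x y : ℝ) (hx : 0 < x) (hy : 0 < y) :
    (∀ (K0 : k), ∀ P1 ∈ p1, ∀ P2 ∈ p2, ∃ Z W : k,
        ⁅f1 Z + (f1 K0 + P1), f1 K0 + x • P1⁆ = f1 W ∧
        ⁅f2 Z + (-(c2 / c1) • f2 K0 + P2), -(c2 / c1) • f2 K0 + y • P2⁆ = f2 W) ↔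
    (∀ (K0 : k), ∀ P1 ∈ p1, ∀ P2 ∈ p2, ∃ Z : k,
        ⁅Z, K0⁆ = 0 ∧
        ⁅f1 Z, P1⁆ = ((1 - x) / x) • ⁅f1 K0, P1⁆ ∧
        ⁅f2 Z, P2⁆ = (c2 * (y - 1) / (c1 * y)) • ⁅f2 K0, P2⁆) :=
  statement2_general f1 f2 c1 c2 hc1 hc2 p1 p2 hint1 hint2 hlie1 hlie2 x y hx hy
end

section
/- If (1 − x)/x = c₂(y − 1)/(c₁ y), then for every K₀ ∈ 𝔨, P₁ ∈ 𝔭₁ and P₂ ∈ 𝔭₂ the element Z = ((1 − x)/x) K₀ satisfies ⁅Z, K₀⁆ = 0, ⁅f₁(Z), P₁⁆ = ((1 − x)/x) ⁅f₁(K₀), P₁⁆ and ⁅f₂(Z), P₂⁆ = (c₂(y − 1)/(c₁ y)) ⁅f₂(K₀), P₂⁆; in particular, (x, y) satisfies the GO condition. -/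
/-! With `Z̄ = (f₁ Z, f₂ Z)` for `Z = ((1 − x)/x)·K₀`, both components of `⁅Z̄ + X, A X⁆` are
multiples of `⁅fᵢ K₀, Pᵢ⁆`; the choice of `Z` kills the first coefficient and the hypothesis
on `(x, y)` the second, so the bracket is `0 ∈ 𝔥`. -/

section LieIdentity

variable {R L : Type*} [CommRing R] [LieRing L] [LieAlgebra R L]

theorem lie_smul_add_smul_add_smul (a b s : R) (K P : L) :
    ⁅a • K + (b • K + P), b • K + s • P⁆ = ((a + b) * s - b) • ⁅K, P⁆ := by
  simp only [add_lie, lie_add, smul_lie, lie_smul, lie_self, smul_zero, add_zero, zero_add,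
    ← lie_skew P K]
  module

theorem lie_smul_add_smul_add_smul_eq_zero {a b s : R} (hs : (a + b) * s - b = 0) (K P : L) :
    ⁅a • K + (b • K + P), b • K + s • P⁆ = 0 := by
  rw [lie_smul_add_smul_add_smul, hs, zero_smul]

end LieIdentity

theorem statement3_general
    {k g1 g2 : Type*}
    [LieRing k] [LieAlgebra ℝ k] [LieRing g1] [LieAlgebra ℝ g1] [LieRing g2] [LieAlgebra ℝ g2]
    (f1 : k →ₗ⁅ℝ⁆ g1) (f2 : k →ₗ⁅ℝ⁆ g2)
    (c1 c2 : ℝ)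
    (p1 : Submodule ℝ g1) (p2 : Submodule ℝ g2)
    (x y : ℝ) (hx : 0 < x) (hy : 0 < y)
    (h : (1 - x) / x = c2 * (y - 1) / (c1 * y)) :
    (∀ (K0 : k), ∀ P1 ∈ p1, ∀ P2 ∈ p2,
        ⁅((1 - x) / x) • K0, K0⁆ = 0 ∧
        ⁅f1 (((1 - x) / x) • K0), P1⁆ = ((1 - x) / x) • ⁅f1 K0, P1⁆ ∧
        ⁅f2 (((1 - x) / x) • K0), P2⁆ = (c2 * (y - 1) / (c1 * y)) • ⁅f2 K0, P2⁆) ∧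
    (∀ (K0 : k), ∀ P1 ∈ p1, ∀ P2 ∈ p2, ∃ Z W : k,
        ⁅f1 Z + (f1 K0 + P1), f1 K0 + x • P1⁆ = f1 W ∧
        ⁅f2 Z + (-(c2 / c1) • f2 K0 + P2), -(c2 / c1) • f2 K0 + y • P2⁆ = f2 W) := by
  set a := (1 - x) / x
  have hcoeff1 : (a + 1) * x - 1 = 0 := by
    simp only [a]
    field_simp
    ring
  have hcoeff2 : (a + -(c2 / c1)) * y - -(c2 / c1) = 0 :=
    calc (a + -(c2 / c1)) * y - -(c2 / c1) = c2 / c1 * ((y - 1) / y * y - y + 1) := by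
          rw [h]; ring
      _ = 0 := by rw [div_mul_cancel₀ _ hy.ne']; ring
  refine ⟨fun K0 P1 _ P2 _ => ⟨?_, ?_, ?_⟩, fun K0 P1 _ P2 _ => ⟨a • K0, 0, ?_, ?_⟩⟩
  · rw [smul_lie, lie_self, smul_zero]
  · rw [map_smul, smul_lie]
  · rw [map_smul, smul_lie, h]
  · simpa using lie_smul_add_smul_add_smul_eq_zero hcoeff1 (f1 K0) P1
  · simpa using lie_smul_add_smul_add_smul_eq_zero hcoeff2 (f2 K0) P2

/-- If `(1 − x)/x = c₂(y − 1)/(c₁ y)`, then for every `K₀ ∈ 𝔨`,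
`P₁ ∈ 𝔭₁`, `P₂ ∈ 𝔭₂` the element `Z = ((1 − x)/x)·K₀` satisfies `⁅Z, K₀⁆ = 0`,
`⁅f₁ Z, P₁⁆ = ((1 − x)/x)·⁅f₁ K₀, P₁⁆` and `⁅f₂ Z, P₂⁆ = (c₂(y − 1)/(c₁ y))·⁅f₂ K₀, P₂⁆`;
in particular `(x, y)` satisfies the GO condition (stated via the parametrization
`X = (f₁ K₀ + P₁, −(c₂/c₁)·f₂ K₀ + P₂)` of `𝔪`, componentwise brackets, and
membership of a pair in `𝔥` meaning it equals `(f₁ W, f₂ W)` for some `W ∈ 𝔨`). -/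
theorem statement3
    {k g1 g2 : Type*}
    [LieRing k] [LieAlgebra ℝ k] [Module.Finite ℝ k] [LieAlgebra.IsSemisimple ℝ k]
    [LieRing g1] [LieAlgebra ℝ g1] [Module.Finite ℝ g1] [LieAlgebra.IsSemisimple ℝ g1]
    [LieRing g2] [LieAlgebra ℝ g2] [Module.Finite ℝ g2] [LieAlgebra.IsSemisimple ℝ g2]
    (f1 : k →ₗ⁅ℝ⁆ g1) (f2 : k →ₗ⁅ℝ⁆ g2)
    (hf1 : Function.Injective f1) (hf2 : Function.Injective f2)
    (c1 c2 : ℝ) (hc1 : 0 < c1) (hc2 : 0 < c2)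
    (hB1 : ∀ Z W : k, killingForm ℝ k Z W = c1 * killingForm ℝ g1 (f1 Z) (f1 W))
    (hB2 : ∀ Z W : k, killingForm ℝ k Z W = c2 * killingForm ℝ g2 (f2 Z) (f2 W))
    (p1 : Submodule ℝ g1) (hp1 : ∀ P : g1, P ∈ p1 ↔ ∀ Z : k, killingForm ℝ g1 P (f1 Z) = 0)
    (p2 : Submodule ℝ g2) (hp2 : ∀ P : g2, P ∈ p2 ↔ ∀ Z : k, killingForm ℝ g2 P (f2 Z) = 0)
    (hsum1 : ∀ a : g1, ∃ Z : k, a - f1 Z ∈ p1)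
    (hsum2 : ∀ a : g2, ∃ Z : k, a - f2 Z ∈ p2)
    (hint1 : ∀ Z : k, f1 Z ∈ p1 → Z = 0)
    (hint2 : ∀ Z : k, f2 Z ∈ p2 → Z = 0)
    (hlie1 : ∀ Z : k, ∀ P ∈ p1, ⁅f1 Z, P⁆ ∈ p1)
    (hlie2 : ∀ Z : k, ∀ P ∈ p2, ⁅f2 Z, P⁆ ∈ p2)
    (x y : ℝ) (hx : 0 < x) (hy : 0 < y)
    (h : (1 - x) / x = c2 * (y - 1) / (c1 * y)) :
    (∀ (K0 : k), ∀ P1 ∈ p1, ∀ P2 ∈ p2,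
        ⁅((1 - x) / x) • K0, K0⁆ = 0 ∧
        ⁅f1 (((1 - x) / x) • K0), P1⁆ = ((1 - x) / x) • ⁅f1 K0, P1⁆ ∧
        ⁅f2 (((1 - x) / x) • K0), P2⁆ = (c2 * (y - 1) / (c1 * y)) • ⁅f2 K0, P2⁆) ∧
    (∀ (K0 : k), ∀ P1 ∈ p1, ∀ P2 ∈ p2, ∃ Z W : k,
        ⁅f1 Z + (f1 K0 + P1), f1 K0 + x • P1⁆ = f1 W ∧
        ⁅f2 Z + (-(c2 / c1) • f2 K0 + P2), -(c2 / c1) • f2 K0 + y • P2⁆ = f2 W) :=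
  statement3_general f1 f2 c1 c2 p1 p2 x y hx hy h
end

section
/- Assume there exists P₁⁰ ∈ 𝔭₁ such that the only Z ∈ 𝔨 with ⁅f₁(Z), P₁⁰⁆ = 0 is Z = 0, and assume there exist K₀ ∈ 𝔨 and P₂ ∈ 𝔭₂ with ⁅f₂(K₀), P₂⁆ ≠ 0. If (x, y) satisfies the GO condition, then (1 − x)/x = c₂(y − 1)/(c₁ y). -/
/-!
Take `X = (f₁ K₀ + P₁⁰, -(c₂/c₁) f₂ K₀ + P₂)` in the GO condition. In each factor the bracket
`⁅f Z + a f K + P, a f K + b P⁆` equals `a f⁅Z, K⁆` plus `⁅f (b Z + a (b - 1) K), P⁆ ∈ 𝔭`, so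
lying in `f(𝔨)` forces the `𝔭`-part to vanish. In `𝔤₁` regularity of `P₁⁰` then gives
`x Z = (1 - x) K₀`; substituting this into the `𝔤₂` equation leaves a scalar multiple of
`⁅f₂ K₀, P₂⁆ ≠ 0`, whose coefficient must vanish, and that is the claimed relation.
-/

section ReductiveComplement

variable {R k g : Type*} [CommRing R] [LieRing k] [LieAlgebra R k] [LieRing g] [LieAlgebra R g]

theorem lie_add_smul_add_smul (A B P : g) (a b : R) :
    ⁅A + (a • B + P), a • B + b • P⁆ = a • ⁅A, B⁆ + (b • ⁅A, P⁆ + (a * (b - 1)) • ⁅B, P⁆) := by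
  have hPB : ⁅P, B⁆ = -⁅B, P⁆ := (lie_skew _ _).symm
  simp only [add_lie, lie_add, lie_smul, smul_lie, lie_self, hPB]
  module

variable (f : k →ₗ⁅R⁆ g) (p : Submodule R g)

theorem eq_zero_of_map_add_eq_map (hint : ∀ Z : k, f Z ∈ p → Z = 0)
    {Z W : k} {P : g} (hP : P ∈ p) (h : f Z + P = f W) : P = 0 := by
  have hWZ : f (W - Z) ∈ p := by rwa [map_sub, ← h, add_sub_cancel_left]
  rw [sub_eq_zero.mp (hint _ hWZ)] at h
  exact add_eq_left.mp h

theorem lie_map_smul_add_smul_eq_zero (hint : ∀ Z : k, f Z ∈ p → Z = 0)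
    (hlie : ∀ Z : k, ∀ P ∈ p, ⁅f Z, P⁆ ∈ p) {Z K W : k} {P : g} (hP : P ∈ p) (a b : R)
    (h : ⁅f Z + (a • f K + P), a • f K + b • P⁆ = f W) :
    ⁅f (b • Z + (a * (b - 1)) • K), P⁆ = 0 := by
  rw [lie_add_smul_add_smul, ← LieHom.map_lie, ← map_smul] at h
  have hbracket : ⁅f (b • Z + (a * (b - 1)) • K), P⁆ = b • ⁅f Z, P⁆ + (a * (b - 1)) • ⁅f K, P⁆ := by
    simp only [map_add, map_smul, add_lie, smul_lie]
  rw [hbracket]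
  exact eq_zero_of_map_add_eq_map f p hint
    (p.add_mem (p.smul_mem _ (hlie Z P hP)) (p.smul_mem _ (hlie K P hP))) h

end ReductiveComplement

theorem statement4_general
    {k g1 g2 : Type*}
    [LieRing k] [LieAlgebra ℝ k] [LieRing g1] [LieAlgebra ℝ g1] [LieRing g2] [LieAlgebra ℝ g2]
    (f1 : k →ₗ⁅ℝ⁆ g1) (f2 : k →ₗ⁅ℝ⁆ g2)
    (c1 c2 : ℝ) (hc1 : 0 < c1)
    (p1 : Submodule ℝ g1) (p2 : Submodule ℝ g2)
    (hint1 : ∀ Z : k, f1 Z ∈ p1 → Z = 0)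
    (hint2 : ∀ Z : k, f2 Z ∈ p2 → Z = 0)
    (hlie1 : ∀ Z : k, ∀ P ∈ p1, ⁅f1 Z, P⁆ ∈ p1)
    (hlie2 : ∀ Z : k, ∀ P ∈ p2, ⁅f2 Z, P⁆ ∈ p2)
    (x y : ℝ) (hx : 0 < x) (hy : 0 < y)
    (P10 : g1) (hP10 : P10 ∈ p1)
    (hreg : ∀ Z : k, ⁅f1 Z, P10⁆ = 0 → Z = 0)
    (hne : ∃ (K0 : k), ∃ P2 ∈ p2, ⁅f2 K0, P2⁆ ≠ 0)
    (hGO : (∀ (K0 : k), ∀ P1 ∈ p1, ∀ P2 ∈ p2, ∃ Z W : k,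
        ⁅f1 Z + (f1 K0 + P1), f1 K0 + x • P1⁆ = f1 W ∧
        ⁅f2 Z + (-(c2 / c1) • f2 K0 + P2), -(c2 / c1) • f2 K0 + y • P2⁆ = f2 W)) :
    (1 - x) / x = c2 * (y - 1) / (c1 * y) := by
  obtain ⟨K0, P2, hP2, hK0⟩ := hne
  obtain ⟨Z, W, h1, h2⟩ := hGO K0 P10 hP10 P2 hP2
  have hZ : x • Z + (x - 1) • K0 = 0 := by
    refine hreg _ ?_
    simpa only [one_mul] using
      lie_map_smul_add_smul_eq_zero f1 p1 hint1 hlie1 hP10 1 x (by rwa [one_smul])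
  have hbracket2 := lie_map_smul_add_smul_eq_zero f2 p2 hint2 hlie2 hP2 _ y h2
  have hcoef : (x * (-(c2 / c1) * (y - 1)) + y * (1 - x)) • ⁅f2 K0, P2⁆ = 0 := by
    have hK : x • (y • Z + (-(c2 / c1) * (y - 1)) • K0)
        = (x * (-(c2 / c1) * (y - 1)) + y * (1 - x)) • K0 := by
      linear_combination (norm := module) y • hZ
    rw [← smul_lie, ← map_smul, ← hK, map_smul, smul_lie, hbracket2, smul_zero]
  have hrel := (smul_eq_zero.mp hcoef).resolve_right hK0
  field_simp at hrel ⊢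
  linarith

/-- Suppose there is `P₁⁰ ∈ 𝔭₁` whose centralizer in `𝔨` is trivial,
and suppose `⁅f₂(𝔨), 𝔭₂⁆ ≠ 0`.  If `(x, y)` satisfies the GO condition, then
`(1 − x)/x = c₂(y − 1)/(c₁ y)`. -/
theorem statement4
    {k g1 g2 : Type*}
    [LieRing k] [LieAlgebra ℝ k] [Module.Finite ℝ k] [LieAlgebra.IsSemisimple ℝ k]
    [LieRing g1] [LieAlgebra ℝ g1] [Module.Finite ℝ g1] [LieAlgebra.IsSemisimple ℝ g1]
    [LieRing g2] [LieAlgebra ℝ g2] [Module.Finite ℝ g2] [LieAlgebra.IsSemisimple ℝ g2]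
    (f1 : k →ₗ⁅ℝ⁆ g1) (f2 : k →ₗ⁅ℝ⁆ g2)
    (hf1 : Function.Injective f1) (hf2 : Function.Injective f2)
    (c1 c2 : ℝ) (hc1 : 0 < c1) (hc2 : 0 < c2)
    (hB1 : ∀ Z W : k, killingForm ℝ k Z W = c1 * killingForm ℝ g1 (f1 Z) (f1 W))
    (hB2 : ∀ Z W : k, killingForm ℝ k Z W = c2 * killingForm ℝ g2 (f2 Z) (f2 W))
    (p1 : Submodule ℝ g1) (hp1 : ∀ P : g1, P ∈ p1 ↔ ∀ Z : k, killingForm ℝ g1 P (f1 Z) = 0)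
    (p2 : Submodule ℝ g2) (hp2 : ∀ P : g2, P ∈ p2 ↔ ∀ Z : k, killingForm ℝ g2 P (f2 Z) = 0)
    (hsum1 : ∀ a : g1, ∃ Z : k, a - f1 Z ∈ p1)
    (hsum2 : ∀ a : g2, ∃ Z : k, a - f2 Z ∈ p2)
    (hint1 : ∀ Z : k, f1 Z ∈ p1 → Z = 0)
    (hint2 : ∀ Z : k, f2 Z ∈ p2 → Z = 0)
    (hlie1 : ∀ Z : k, ∀ P ∈ p1, ⁅f1 Z, P⁆ ∈ p1)
    (hlie2 : ∀ Z : k, ∀ P ∈ p2, ⁅f2 Z, P⁆ ∈ p2)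
    (x y : ℝ) (hx : 0 < x) (hy : 0 < y)
    (P10 : g1) (hP10 : P10 ∈ p1)
    (hreg : ∀ Z : k, ⁅f1 Z, P10⁆ = 0 → Z = 0)
    (hne : ∃ (K0 : k), ∃ P2 ∈ p2, ⁅f2 K0, P2⁆ ≠ 0)
    (hGO : (∀ (K0 : k), ∀ P1 ∈ p1, ∀ P2 ∈ p2, ∃ Z W : k,
        ⁅f1 Z + (f1 K0 + P1), f1 K0 + x • P1⁆ = f1 W ∧
        ⁅f2 Z + (-(c2 / c1) • f2 K0 + P2), -(c2 / c1) • f2 K0 + y • P2⁆ = f2 W)) :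
    (1 - x) / x = c2 * (y - 1) / (c1 * y) :=
  statement4_general f1 f2 c1 c2 hc1 p1 p2 hint1 hint2 hlie1 hlie2 x y hx hy P10 hP10 hreg hne hGO
end

section
/- Assume 𝔨 is simple with negative definite Killing form B_𝔨 and B₂ is negative definite. Assume there exists P₁⁰ ∈ 𝔭₁ such that the centralizer 𝔱 = {Z ∈ 𝔨 : ⁅f₁(Z), P₁⁰⁆ = 0} is an abelian subalgebra of 𝔨, and assume ⁅f₂(𝔨), 𝔭₂⁆ ≠ 0. If (x, y) satisfies the GO condition, then (1 − x)/x = c₂(y − 1)/(c₁ y). -/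
/-!
Apply the GO condition to `X = (f₁ K + P₁⁰, -(c₂/c₁) f₂ K + P₂)` and split each component of
`⁅Z̄ + X, A X⁆` along `fᵢ(𝔨) ⊕ 𝔭ᵢ`: the `fᵢ(𝔨)`-parts force `⁅Z, K⁆ = 0`, and the `𝔭₁`-part says
that `x Z - (1 - x) K` centralizes `P₁⁰`. If `K` is regular, i.e. no nonzero element of the
abelian centralizer `𝔱` commutes with `K`, then `x Z = (1 - x) K`, and the `𝔭₂`-part becomes
`(y (1 - x) + x (c₂/c₁) (1 - y)) ⁅f₂ K, P₂⁆ = 0`. So unless `(1 - x)/x = c₂(y - 1)/(c₁ y)`,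
regular elements act trivially on `𝔭₂`.

Regular elements exist because `ad 𝔱` is a commuting family of operators that are skew for the
definite Killing form: for a vector `v` whose common kernel of annihilators `U` is maximal, any
`w ∈ U^⊥ \ U` would make the common kernel for `v + w` strictly larger. The elements of `𝔨`
acting trivially on `𝔭₂` form an ideal containing a regular element; by simplicity it is all of
`𝔨` (or it is `0`, then `𝔱 = 0` and every element is regular), contradicting `⁅f₂(𝔨), 𝔭₂⁆ ≠ 0`.
-/

namespace Module.End

variable {𝕜 V : Type*} [Field 𝕜] [AddCommGroup V] [Module 𝕜 V]

def kerOfAnnihilators (S : Set (Module.End 𝕜 V)) (v : V) : Submodule 𝕜 V :=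
  ⨅ f ∈ {f ∈ S | f v = 0}, LinearMap.ker f

variable {S : Set (Module.End 𝕜 V)} {v u : V}

theorem mem_kerOfAnnihilators : u ∈ kerOfAnnihilators S v ↔ ∀ f ∈ S, f v = 0 → f u = 0 := by
  simp [kerOfAnnihilators]

theorem self_mem_kerOfAnnihilators : v ∈ kerOfAnnihilators S v :=
  mem_kerOfAnnihilators.2 fun _ _ h ↦ h

theorem apply_mem_kerOfAnnihilators (hS : ∀ f ∈ S, ∀ g ∈ S, Commute f g) {f : Module.End 𝕜 V}
    (hf : f ∈ S) (hu : u ∈ kerOfAnnihilators S v) : f u ∈ kerOfAnnihilators S v :=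
  mem_kerOfAnnihilators.2 fun g hg hgv ↦ by
    rw [← Module.End.mul_apply, (hS g hg f hf).eq, Module.End.mul_apply,
      mem_kerOfAnnihilators.1 hu g hg hgv, map_zero]

end Module.End

namespace LinearMap.BilinForm

open Module.End

variable {𝕜 V : Type*} [Field 𝕜] [AddCommGroup V] [Module 𝕜 V] {S : Set (Module.End 𝕜 V)} {u : V}

theorem apply_mem_orthogonal {B : LinearMap.BilinForm 𝕜 V} {f : Module.End 𝕜 V}
    (hf : LinearMap.IsSkewAdjoint B f) {W : Submodule 𝕜 V} (hW : ∀ w ∈ W, f w ∈ W)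
    (hu : u ∈ B.orthogonal W) : f u ∈ B.orthogonal W := fun w hw ↦ by
  have := hf w u
  simp only [Pi.neg_apply, map_neg] at this
  simp only [← neg_eq_zero (a := B w (f u)), ← this, hu _ (hW w hw)]

variable [FiniteDimensional 𝕜 V]

theorem exists_mem_orthogonal_notMem {B : LinearMap.BilinForm 𝕜 V} (hB : B.IsRefl)
    (hanis : ∀ v, B v v = 0 → v = 0) {W : Submodule 𝕜 V} (hW : W ≠ ⊤) :
    ∃ w ∈ B.orthogonal W, w ∉ W := by
  have hdisj : Disjoint W (B.orthogonal W) := Submodule.disjoint_def.2 fun w hw hw' ↦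
    hanis w (hw' w hw)
  by_contra! h
  rw [Ne, eq_top_iff, ← ((isCompl_orthogonal_iff_disjoint hB).2 hdisj).sup_eq_top] at hW
  exact hW (sup_le le_rfl h)

theorem exists_forall_apply_eq_zero_imp_eq_zero {B : LinearMap.BilinForm 𝕜 V} (hB : B.IsRefl)
    (hanis : ∀ v, B v v = 0 → v = 0) (hskew : ∀ f ∈ S, LinearMap.IsSkewAdjoint B f)
    (hS : ∀ f ∈ S, ∀ g ∈ S, Commute f g) :
    ∃ v, ∀ f ∈ S, f v = 0 → f = 0 := by
  obtain ⟨_, ⟨v, rfl⟩, hmax⟩ := set_has_maximal_iff_noetherian.2 inferInstance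
    (Set.range (kerOfAnnihilators S)) (Set.range_nonempty _)
  set U := kerOfAnnihilators S v
  suffices hU : U = ⊤ from ⟨v, fun f hf hfv ↦ LinearMap.ext fun u ↦
    mem_kerOfAnnihilators.1 (hU ▸ Submodule.mem_top : u ∈ U) f hf hfv⟩
  by_contra hU
  obtain ⟨w, hw, hwU⟩ := exists_mem_orthogonal_notMem hB hanis hU
  -- `f v ∈ U` and `f w ∈ Uᗮ`, so `f (v + w) = 0` forces both to vanish
  have hsplit : ∀ f ∈ S, f (v + w) = 0 → f v = 0 ∧ f w = 0 := by
    intro f hf h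
    have hfv : f v ∈ U := apply_mem_kerOfAnnihilators hS hf self_mem_kerOfAnnihilators
    have hfw : f w ∈ B.orthogonal U :=
      apply_mem_orthogonal (hskew f hf) (fun _ ↦ apply_mem_kerOfAnnihilators hS hf) hw
    rw [map_add, add_eq_zero_iff_eq_neg] at h
    have hfv0 : f v = 0 := hanis _ ((h ▸ neg_mem hfw : f v ∈ B.orthogonal U) _ hfv)
    exact ⟨hfv0, by rwa [hfv0, zero_eq_neg] at h⟩
  refine hmax _ ⟨v + w, rfl⟩ (SetLike.lt_iff_le_and_exists.2 ⟨fun u hu ↦ ?_, w, ?_, hwU⟩)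
  · exact mem_kerOfAnnihilators.2 fun f hf h ↦
      mem_kerOfAnnihilators.1 hu f hf (hsplit f hf h).1
  · exact mem_kerOfAnnihilators.2 fun f hf h ↦ (hsplit f hf h).2

end LinearMap.BilinForm

namespace LieAlgebra

variable {𝕜 L : Type*} [Field 𝕜] [LieRing L] [LieAlgebra 𝕜 L] [FiniteDimensional 𝕜 L]

theorem exists_forall_lie_eq_zero_imp_eq_zero
    (hanis : ∀ T : L, killingForm 𝕜 L T T = 0 → T = 0) {t : Set L}
    (ht : ∀ T ∈ t, ∀ T' ∈ t, ⁅T, T'⁆ = 0) :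
    ∃ X : L, ∀ T ∈ t, ⁅T, X⁆ = 0 → T = 0 := by
  have hskew : ∀ f ∈ ad 𝕜 L '' t, LinearMap.IsSkewAdjoint (killingForm 𝕜 L) f := by
    rintro _ ⟨T, -, rfl⟩ Y Z
    simp only [ad_apply, Pi.neg_apply, map_neg]
    exact LieModule.traceForm_apply_lie_apply' 𝕜 L L T Y Z
  have hcomm : ∀ f ∈ ad 𝕜 L '' t, ∀ g ∈ ad 𝕜 L '' t, Commute f g := by
    rintro _ ⟨T, hT, rfl⟩ _ ⟨T', hT', rfl⟩
    refine (commute_iff_eq _ _).2 (LinearMap.ext fun Y ↦ ?_)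
    simp only [Module.End.mul_apply, ad_apply]
    rw [leibniz_lie, ht T hT T' hT', zero_lie, zero_add]
  obtain ⟨X, hX⟩ := LinearMap.BilinForm.exists_forall_apply_eq_zero_imp_eq_zero
    (LieModule.traceForm_isSymm 𝕜 L L).isRefl hanis hskew hcomm
  refine ⟨X, fun T hT hTX ↦ hanis T ?_⟩
  rw [killingForm_apply_apply, hX _ ⟨T, hT, rfl⟩ hTX, LinearMap.zero_comp, map_zero]

end LieAlgebra

theorem LinearMap.eq_and_eq_zero_of_map_add_eq_map {R M N : Type*} [Ring R] [AddCommGroup M]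
    [Module R M] [AddCommGroup N] [Module R N] (f : M →ₗ[R] N) {p : Submodule R N}
    (hf : ∀ Z, f Z ∈ p → Z = 0) {A W : M} {Q : N} (hQ : Q ∈ p) (h : f A + Q = f W) :
    W = A ∧ Q = 0 := by
  have hWA : W - A = 0 := hf _ (by rwa [map_sub, ← h, add_sub_cancel_left])
  rw [sub_eq_zero] at hWA
  subst hWA
  exact ⟨rfl, add_eq_left.1 h⟩

section

variable {R k g : Type*} [CommRing R] [LieRing k] [LieAlgebra R k] [LieRing g] [LieAlgebra R g]

theorem LieHom.lie_map_add_smul_map_add (f : k →ₗ⁅R⁆ g) (a t : R) (Z K : k) (P : g) :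
    ⁅f Z + (a • f K + P), a • f K + t • P⁆ =
      f (a • ⁅Z, K⁆) + (t • ⁅f Z, P⁆ + (a * t - a) • ⁅f K, P⁆) := by
  simp only [add_lie, lie_add, lie_smul, smul_lie, lie_self, smul_zero, LieHom.map_lie, map_smul]
  rw [← lie_skew P (f K)]
  module

theorem LieHom.eq_smul_lie_and_lie_eq_zero_of_lie_eq_map (f : k →ₗ⁅R⁆ g) {p : Submodule R g}
    (hint : ∀ Z, f Z ∈ p → Z = 0) (hlie : ∀ Z, ∀ P ∈ p, ⁅f Z, P⁆ ∈ p) {a t : R} {Z K W : k}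
    {P : g} (hP : P ∈ p) (h : ⁅f Z + (a • f K + P), a • f K + t • P⁆ = f W) :
    W = a • ⁅Z, K⁆ ∧ t • ⁅f Z, P⁆ + (a * t - a) • ⁅f K, P⁆ = 0 := by
  rw [lie_map_add_smul_map_add] at h
  exact (f : k →ₗ[R] g).eq_and_eq_zero_of_map_add_eq_map hint
    (add_mem (p.smul_mem _ (hlie Z P hP)) (p.smul_mem _ (hlie K P hP))) h

def LieHom.annihilatorIdeal (f : k →ₗ⁅R⁆ g) (p : Submodule R g)
    (hp : ∀ Z, ∀ P ∈ p, ⁅f Z, P⁆ ∈ p) : LieIdeal R k where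
  carrier := {Z | ∀ P ∈ p, ⁅f Z, P⁆ = 0}
  add_mem' ha hb P hP := by rw [map_add, add_lie, ha P hP, hb P hP, add_zero]
  zero_mem' P _ := by rw [map_zero, zero_lie]
  smul_mem' r a ha P hP := by rw [map_smul, smul_lie, ha P hP, smul_zero]
  lie_mem {u a} ha P hP := by
    rw [LieHom.map_lie, lie_lie, ha P hP, lie_zero, zero_sub, ha _ (hp u P hP), neg_zero]

end

section

variable {𝕜 k g1 g2 : Type*} [Field 𝕜] [LieRing k] [LieAlgebra 𝕜 k]
  [LieRing g1] [LieAlgebra 𝕜 g1] [LieRing g2] [LieAlgebra 𝕜 g2]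
  {f1 : k →ₗ⁅𝕜⁆ g1} {f2 : k →ₗ⁅𝕜⁆ g2} {p1 : Submodule 𝕜 g1} {p2 : Submodule 𝕜 g2}

theorem smul_lie_eq_zero_of_lie_eq_map_of_lie_eq_map
    (hint1 : ∀ Z, f1 Z ∈ p1 → Z = 0) (hint2 : ∀ Z, f2 Z ∈ p2 → Z = 0)
    (hlie1 : ∀ Z, ∀ P ∈ p1, ⁅f1 Z, P⁆ ∈ p1) (hlie2 : ∀ Z, ∀ P ∈ p2, ⁅f2 Z, P⁆ ∈ p2)
    {c x y : 𝕜} (hc : 1 + c ≠ 0) {P1 : g1} (hP1 : P1 ∈ p1) {P2 : g2} (hP2 : P2 ∈ p2) {K Z W : k}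
    (hK : ∀ T, ⁅f1 T, P1⁆ = 0 → ⁅T, K⁆ = 0 → T = 0)
    (h1 : ⁅f1 Z + (f1 K + P1), f1 K + x • P1⁆ = f1 W)
    (h2 : ⁅f2 Z + (-c • f2 K + P2), -c • f2 K + y • P2⁆ = f2 W) :
    (y * (1 - x) + x * c * (1 - y)) • ⁅f2 K, P2⁆ = 0 := by
  obtain ⟨hW1, hbr1⟩ := f1.eq_smul_lie_and_lie_eq_zero_of_lie_eq_map hint1 hlie1 (a := 1) hP1
    (by simpa only [one_smul] using h1)
  obtain ⟨hW2, hbr2⟩ := f2.eq_smul_lie_and_lie_eq_zero_of_lie_eq_map hint2 hlie2 hP2 h2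
  have hZK : ⁅Z, K⁆ = 0 := by
    refine (smul_eq_zero.1 (?_ : (1 + c) • ⁅Z, K⁆ = 0)).resolve_left hc
    rw [hW1] at hW2
    linear_combination (norm := module) hW2
  -- `x • Z - (1 - x) • K` centralizes both `P1` and `K`
  have hxZ : x • Z = (1 - x) • K := by
    rw [← sub_eq_zero]
    refine hK _ ?_ ?_
    · simp only [map_sub, map_smul, sub_lie, smul_lie]
      linear_combination (norm := module) hbr1
    · rw [sub_lie, smul_lie, smul_lie, hZK, lie_self, smul_zero, smul_zero, sub_zero]
  have hfZ : x • ⁅f2 Z, P2⁆ = (1 - x) • ⁅f2 K, P2⁆ := by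
    rw [← smul_lie, ← map_smul, hxZ, map_smul, smul_lie]
  linear_combination (norm := module) x • hbr2 - y • hfZ

end

theorem statement5_general
    {k g1 g2 : Type*}
    [LieRing k] [LieAlgebra ℝ k] [Module.Finite ℝ k]
    [LieRing g1] [LieAlgebra ℝ g1]
    [LieRing g2] [LieAlgebra ℝ g2]
    (f1 : k →ₗ⁅ℝ⁆ g1) (f2 : k →ₗ⁅ℝ⁆ g2)
    (c1 c2 : ℝ) (hc1 : 0 < c1) (hc2 : 0 < c2)
    (p1 : Submodule ℝ g1)
    (p2 : Submodule ℝ g2)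
    (hint1 : ∀ Z : k, f1 Z ∈ p1 → Z = 0)
    (hint2 : ∀ Z : k, f2 Z ∈ p2 → Z = 0)
    (hlie1 : ∀ Z : k, ∀ P ∈ p1, ⁅f1 Z, P⁆ ∈ p1)
    (hlie2 : ∀ Z : k, ∀ P ∈ p2, ⁅f2 Z, P⁆ ∈ p2)
    (x y : ℝ) (hx : 0 < x) (hy : 0 < y)
    [LieAlgebra.IsSimple ℝ k]
    (hknd : ∀ Z : k, Z ≠ 0 → killingForm ℝ k Z Z < 0)
    (P10 : g1) (hP10 : P10 ∈ p1)
    (habel : ∀ Z W : k, ⁅f1 Z, P10⁆ = 0 → ⁅f1 W, P10⁆ = 0 → ⁅Z, W⁆ = 0)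
    (hne : ∃ (K0 : k), ∃ P2 ∈ p2, ⁅f2 K0, P2⁆ ≠ 0)
    (hGO : (∀ (K0 : k), ∀ P1 ∈ p1, ∀ P2 ∈ p2, ∃ Z W : k,
        ⁅f1 Z + (f1 K0 + P1), f1 K0 + x • P1⁆ = f1 W ∧
        ⁅f2 Z + (-(c2 / c1) • f2 K0 + P2), -(c2 / c1) • f2 K0 + y • P2⁆ = f2 W)) :
    (1 - x) / x = c2 * (y - 1) / (c1 * y) := by
  by_contra hxy
  have hcoeff : y * (1 - x) + x * (c2 / c1) * (1 - y) ≠ 0 := by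
    intro h
    apply hxy
    field_simp at h ⊢
    linarith
  obtain ⟨X, hX⟩ := LieAlgebra.exists_forall_lie_eq_zero_imp_eq_zero (t := {T | ⁅f1 T, P10⁆ = 0})
    (fun T hT ↦ by_contra fun h ↦ (hknd T h).ne hT) (fun T hT T' hT' ↦ habel T T' hT hT')
  set N := f2.annihilatorIdeal p2 hlie2
  have hregular_mem : ∀ K, (∀ T, ⁅f1 T, P10⁆ = 0 → ⁅T, K⁆ = 0 → T = 0) → K ∈ N := by
    intro K hK P2 hP2
    obtain ⟨Z, W, h1, h2⟩ := hGO K P10 hP10 P2 hP2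
    exact (smul_eq_zero.1 (smul_lie_eq_zero_of_lie_eq_map_of_lie_eq_map hint1 hint2 hlie1 hlie2
      (by positivity) hP10 hP2 hK h1 h2)).resolve_left hcoeff
  obtain ⟨K, P2, hP2, hKP2⟩ := hne
  refine hKP2 ((?_ : K ∈ N) P2 hP2)
  rcases LieAlgebra.IsSimple.eq_bot_or_eq_top N with hN | hN
  · have hX0 : X = 0 := by simpa [hN] using hregular_mem X hX
    exact hregular_mem K fun T hT _ ↦ hX T hT (by rw [hX0, lie_zero])
  · exact hN ▸ LieSubmodule.mem_top K

/-- Assume `𝔨` is simple with negative definite Killing form and `B₂`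
is negative definite.  If some `P₁⁰ ∈ 𝔭₁` has abelian centralizer
`𝔱 = {Z ∈ 𝔨 : ⁅f₁ Z, P₁⁰⁆ = 0}` and `⁅f₂(𝔨), 𝔭₂⁆ ≠ 0`, then the GO condition for
`(x, y)` implies `(1 − x)/x = c₂(y − 1)/(c₁ y)`. -/
theorem statement5
    {k g1 g2 : Type*}
    [LieRing k] [LieAlgebra ℝ k] [Module.Finite ℝ k] [LieAlgebra.IsSemisimple ℝ k]
    [LieRing g1] [LieAlgebra ℝ g1] [Module.Finite ℝ g1] [LieAlgebra.IsSemisimple ℝ g1]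
    [LieRing g2] [LieAlgebra ℝ g2] [Module.Finite ℝ g2] [LieAlgebra.IsSemisimple ℝ g2]
    (f1 : k →ₗ⁅ℝ⁆ g1) (f2 : k →ₗ⁅ℝ⁆ g2)
    (hf1 : Function.Injective f1) (hf2 : Function.Injective f2)
    (c1 c2 : ℝ) (hc1 : 0 < c1) (hc2 : 0 < c2)
    (hB1 : ∀ Z W : k, killingForm ℝ k Z W = c1 * killingForm ℝ g1 (f1 Z) (f1 W))
    (hB2 : ∀ Z W : k, killingForm ℝ k Z W = c2 * killingForm ℝ g2 (f2 Z) (f2 W))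
    (p1 : Submodule ℝ g1) (hp1 : ∀ P : g1, P ∈ p1 ↔ ∀ Z : k, killingForm ℝ g1 P (f1 Z) = 0)
    (p2 : Submodule ℝ g2) (hp2 : ∀ P : g2, P ∈ p2 ↔ ∀ Z : k, killingForm ℝ g2 P (f2 Z) = 0)
    (hsum1 : ∀ a : g1, ∃ Z : k, a - f1 Z ∈ p1)
    (hsum2 : ∀ a : g2, ∃ Z : k, a - f2 Z ∈ p2)
    (hint1 : ∀ Z : k, f1 Z ∈ p1 → Z = 0)
    (hint2 : ∀ Z : k, f2 Z ∈ p2 → Z = 0)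
    (hlie1 : ∀ Z : k, ∀ P ∈ p1, ⁅f1 Z, P⁆ ∈ p1)
    (hlie2 : ∀ Z : k, ∀ P ∈ p2, ⁅f2 Z, P⁆ ∈ p2)
    (x y : ℝ) (hx : 0 < x) (hy : 0 < y)
    [LieAlgebra.IsSimple ℝ k]
    (hknd : ∀ Z : k, Z ≠ 0 → killingForm ℝ k Z Z < 0)
    (hg2nd : ∀ a : g2, a ≠ 0 → killingForm ℝ g2 a a < 0)
    (P10 : g1) (hP10 : P10 ∈ p1)
    (habel : ∀ Z W : k, ⁅f1 Z, P10⁆ = 0 → ⁅f1 W, P10⁆ = 0 → ⁅Z, W⁆ = 0)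
    (hne : ∃ (K0 : k), ∃ P2 ∈ p2, ⁅f2 K0, P2⁆ ≠ 0)
    (hGO : (∀ (K0 : k), ∀ P1 ∈ p1, ∀ P2 ∈ p2, ∃ Z W : k,
        ⁅f1 Z + (f1 K0 + P1), f1 K0 + x • P1⁆ = f1 W ∧
        ⁅f2 Z + (-(c2 / c1) • f2 K0 + P2), -(c2 / c1) • f2 K0 + y • P2⁆ = f2 W)) :
    (1 - x) / x = c2 * (y - 1) / (c1 * y) :=
  statement5_general f1 f2 c1 c2 hc1 hc2 p1 p2 hint1 hint2 hlie1 hlie2 x y hx hy hknd P10 hP10 habel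
    hne hGO
end

section
/- Let 𝔤 be a real Lie algebra, 𝔥 ⊆ 𝔤 a Lie subalgebra, and 𝔪 ⊆ 𝔤 a subspace with ⁅𝔥, 𝔪⁆ ⊆ 𝔪 and 𝔤 = 𝔥 ⊕ 𝔪. Let A : 𝔪 → 𝔪 be a linear map and suppose 𝔪 = 𝔟₁ ⊕ ⋯ ⊕ 𝔟_k, where each 𝔟_t satisfies ⁅𝔥, 𝔟_t⁆ ⊆ 𝔟_t and A = λ_t·id on 𝔟_t, with λ₁, …, λ_k pairwise distinct reals. Assume that for every X ∈ 𝔪 there exists W ∈ 𝔥 with ⁅W + X, A(X)⁆ = 0. Then for all i ≠ j and all subspaces 𝔮ᵢ ⊆ 𝔟ᵢ, 𝔮ⱼ ⊆ 𝔟ⱼ with ⁅𝔥, 𝔮ᵢ⁆ ⊆ 𝔮ᵢ and ⁅𝔥, 𝔮ⱼ⁆ ⊆ 𝔮ⱼ, one has ⁅𝔮ᵢ, 𝔮ⱼ⁆ ⊆ 𝔮ᵢ + 𝔮ⱼ. -/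
/-- Let `g = h ⊕ m` with `⁅h, m⁆ ⊆ m`, let `A : m → m` be linear with
eigenspace decomposition `m = b₁ ⊕ ⋯ ⊕ b_K` into `ad(h)`-invariant subspaces on which
`A = λ_t·id`, the `λ_t` pairwise distinct.  If for every `X ∈ m` there is `W ∈ h` with
`⁅W + X, A X⁆ = 0`, then for all `i ≠ j` and all `ad(h)`-invariant subspaces `qi ⊆ bᵢ`,
`qj ⊆ bⱼ` one has `⁅qi, qj⁆ ⊆ qi + qj`. -/
theorem statement11
    {g : Type*} [LieRing g] [LieAlgebra ℝ g] [Module.Finite ℝ g]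
    (h : LieSubalgebra ℝ g) (m : Submodule ℝ g)
    (hhm : ∀ H ∈ h, ∀ X ∈ m, ⁅H, X⁆ ∈ m)
    (hcompl : IsCompl h.toSubmodule m)
    (A : g →ₗ[ℝ] g)
    (K : ℕ) (b : Fin K → Submodule ℝ g) (lam : Fin K → ℝ)
    (hlam : Function.Injective lam)
    (hbm : ∀ t, b t ≤ m)
    (hbindep : iSupIndep b)
    (hbsup : (⨆ t, b t) = m)
    (hbinv : ∀ t, ∀ H ∈ h, ∀ X ∈ b t, ⁅H, X⁆ ∈ b t)
    (hA : ∀ t, ∀ X ∈ b t, A X = lam t • X)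
    (hGO : ∀ X ∈ m, ∃ W ∈ h, ⁅W + X, A X⁆ = 0) :
    ∀ i j : Fin K, i ≠ j → ∀ qi qj : Submodule ℝ g, qi ≤ b i → qj ≤ b j →
      (∀ H ∈ h, ∀ X ∈ qi, ⁅H, X⁆ ∈ qi) → (∀ H ∈ h, ∀ X ∈ qj, ⁅H, X⁆ ∈ qj) →
      ∀ Xi ∈ qi, ∀ Xj ∈ qj, ⁅Xi, Xj⁆ ∈ qi ⊔ qj := by
  intro i j hij qi qj hqi hqj hinvi hinvj Xi hXi Xj hXj
  obtain ⟨W, hW, heq⟩ := hGO (Xi + Xj) (add_mem (hbm i (hqi hXi)) (hbm j (hqj hXj)))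
  have hAX : A (Xi + Xj) = lam i • Xi + lam j • Xj := by
    rw [map_add, hA i Xi (hqi hXi), hA j Xj (hqj hXj)]
  rw [hAX] at heq
  have hne : lam j - lam i ≠ 0 :=
    sub_ne_zero.2 fun e => hij ((hlam e).symm)
  have key : (lam j - lam i) • ⁅Xi, Xj⁆
      = -(lam i • ⁅W, Xi⁆) - lam j • ⁅W, Xj⁆ := by
    have h2 : ⁅Xj, Xi⁆ = -⁅Xi, Xj⁆ := by rw [← lie_skew]
    simp only [add_lie, lie_add, lie_smul, lie_self, smul_zero, add_zero, h2,
      smul_neg] at heq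
    have : lam i • ⁅W, Xi⁆ + lam j • ⁅W, Xj⁆ + (lam j • ⁅Xi, Xj⁆ - lam i • ⁅Xi, Xj⁆) = 0 := by
      rw [← heq]; module
    linear_combination (norm := module) this
  have hmem : (lam j - lam i) • ⁅Xi, Xj⁆ ∈ qi ⊔ qj := by
    rw [key]
    exact sub_mem
      (neg_mem (Submodule.smul_mem _ _ (Submodule.mem_sup_left (hinvi W hW Xi hXi))))
      (Submodule.smul_mem _ _ (Submodule.mem_sup_right (hinvj W hW Xj hXj)))
  have := Submodule.smul_mem (qi ⊔ qj) (lam j - lam i)⁻¹ hmem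
  rwa [inv_smul_smul₀ hne] at this
end

section
/- Assume in addition that 𝔨 is simple, that 𝔭₁ ≠ 0 is irreducible as an ad(𝔨)-module (its only 𝔨-invariant subspaces are 0 and 𝔭₁), and that 𝔭₁ is not isomorphic, as an ad(𝔨)-module, to 𝔨 with the adjoint action. Let A : 𝔪 → 𝔪 be an ℝ-linear map that is ad(𝔥)-equivariant (A(⁅H, X⁆) = ⁅H, A(X)⁆ for H ∈ 𝔥, X ∈ 𝔪), B-symmetric (B(A(X), Y) = B(X, A(Y)) for X, Y ∈ 𝔪), and positive definite (−B(A(X), X) > 0 for all nonzero X ∈ 𝔪). If for every X ∈ 𝔪 there exists Z ∈ 𝔥 with ⁅Z + X, A(X)⁆ = 0, then A is diagonal with respect to the decomposition 𝔪 = 𝔪₀ ⊕ 𝔪₁ ⊕ 𝔪₂: there exist reals c₀, x, y > 0 with A = c₀·id on 𝔪₀, A = x·id on 𝔪₁ and A = y·id on 𝔪₂. -/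
/-!
Inside `𝔤₁ × 𝔤₁` the space `𝔪` is `{X | X₁ + X₂ ∈ 𝔭₁}`. Restricted to `𝔪₀ ≅ 𝔨`, the two
components of `A` are `ad 𝔨`-equivariant maps `𝔨 → 𝔤₁`; their `𝔭₁`-parts vanish by Schur's lemma
because `𝔭₁ ≇ 𝔨`, so `A` preserves `𝔪₀` and, being symmetric, also `𝔪₁ ⊕ 𝔪₂ = 𝔭₁ × 𝔭₁`.
An equivariant operator that is symmetric for a definite form is scalar on an irreducible module
(its eigenspaces are invariant), which gives `c₀`, `x` and `y`; positivity of `A` makes them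
positive.

For the off-diagonal block `T : 𝔭₁ → 𝔭₁`, `Q ↦ (A (0, Q))₁`, the geodesic orbit condition at
`X = (⁅T Q, W⁆, Q)`, paired with `W ∈ 𝔨`, yields `B(P, P) = 0` for `P = ⁅T Q, W⁆`; so `𝔨` fixes
`T Q`. A nonzero `𝔨`-fixed vector would make the irreducible `𝔭₁` a line, central in `𝔤₁`,
contradicting the definiteness of `B`. The other off-diagonal block is the adjoint of `T`.
-/

open LinearMap (BilinForm)

theorem LinearMap.IsSelfAdjoint.exists_hasEigenvalue {E : Type*} [AddCommGroup E] [Module ℝ E]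
    [FiniteDimensional ℝ E] [Nontrivial E] {b : BilinForm ℝ E} (hb : b.IsSymm)
    (hpos : ∀ x, x ≠ 0 → 0 < b x x) {T : Module.End ℝ E} (hT : LinearMap.IsSelfAdjoint b T) :
    ∃ c, Module.End.HasEigenvalue T c := by
  let core : InnerProductSpace.Core ℝ E :=
    { inner := fun x y => b x y
      conj_inner_symm := fun x y => hb.eq y x
      re_inner_nonneg := fun x => by
        rcases eq_or_ne x 0 with rfl | hx
        · simp
        · exact (hpos x hx).le
      add_left := fun x y z => by simp
      smul_left := fun x y r => by simp
      definite := fun x hx => not_not.1 fun h => (hpos x h).ne' hx }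
  let _ : NormedAddCommGroup E := core.toNormedAddCommGroup
  let _ : InnerProductSpace ℝ E := InnerProductSpace.ofCore core.toCore
  exact ⟨_, LinearMap.IsSymmetric.hasEigenvalue_iSup_of_finiteDimensional (T := T) hT⟩

namespace LieSubalgebra

variable {R L : Type*} [CommRing R] [LieRing L] [LieAlgebra R L]

def AdStable (k : LieSubalgebra R L) (W : Submodule R L) : Prop :=
  ∀ Z ∈ k, ∀ P ∈ W, ⁅Z, P⁆ ∈ W

def AdIrreducible (k : LieSubalgebra R L) (V : Submodule R L) : Prop :=
  ∀ W : Submodule R L, W ≤ V → k.AdStable W → W = ⊥ ∨ W = V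

theorem adIrreducible_toSubmodule (k : LieSubalgebra R L) [LieAlgebra.IsSimple R k] :
    k.AdIrreducible k.toSubmodule := by
  intro W hWk hW
  let I : LieIdeal R k :=
    { carrier := {Z | (Z : L) ∈ W}
      add_mem' := W.add_mem
      zero_mem' := W.zero_mem
      smul_mem' := fun c _ => W.smul_mem c
      lie_mem := fun {Z} _ hP => hW Z Z.2 _ hP }
  refine (LieAlgebra.IsSimple.eq_bot_or_eq_top I).imp (fun hI => ?_) (fun hI => ?_)
  · refine (Submodule.eq_bot_iff W).2 fun P hP => ?_
    have : (⟨P, hWk hP⟩ : k) = 0 := by simpa [hI] using (show (⟨P, hWk hP⟩ : k) ∈ I from hP)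
    exact congrArg Subtype.val this
  · refine le_antisymm hWk fun P hP => ?_
    exact (hI ▸ LieSubmodule.mem_top _ : (⟨P, hP⟩ : k) ∈ I)

def AdIsomorphic (k : LieSubalgebra R L) (V W : Submodule R L) : Prop :=
  ∃ θ : L →ₗ[R] L, Set.BijOn θ V W ∧ ∀ Z ∈ k, ∀ P ∈ V, θ ⁅Z, P⁆ = ⁅Z, θ P⁆

theorem adStable_toSubmodule (k : LieSubalgebra R L) : k.AdStable k.toSubmodule :=
  fun _ hZ _ hP => k.lie_mem hZ hP

variable {k : LieSubalgebra R L}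

theorem AdStable.projection_lie {p q : Submodule R L} (hp : k.AdStable p) (hq : k.AdStable q)
    (hpq : IsCompl p q) {Z : L} (hZ : Z ∈ k) (x : L) :
    p.projection q hpq ⁅Z, x⁆ = ⁅Z, p.projection q hpq x⁆ := by
  conv_lhs => rw [← p.projection_add_projection_eq_self hpq x, lie_add, map_add,
    p.projection_apply_of_mem_left hpq (hp Z hZ _ (p.projection_apply_mem hpq x)),
    (p.projection_apply_eq_zero_iff hpq).2 (hq Z hZ _ (q.projection_apply_mem hpq.symm x)),
    add_zero]

theorem AdIrreducible.eq_zero_of_not_adIsomorphic {p : Submodule R L}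
    (hk : k.AdIrreducible k.toSubmodule) (hp : k.AdIrreducible p) (hkp : IsCompl k.toSubmodule p)
    (hnot : ¬ k.AdIsomorphic k.toSubmodule p) {ξ : L →ₗ[R] L} (hξp : ∀ Z ∈ k, ξ Z ∈ p)
    (hξ : ∀ W ∈ k, ∀ Z ∈ k, ξ ⁅W, Z⁆ = ⁅W, ξ Z⁆) : ∀ Z ∈ k, ξ Z = 0 := by
  rcases hk (k.toSubmodule ⊓ LinearMap.ker ξ) inf_le_left (fun W hW Z hZ =>
      ⟨k.lie_mem hW hZ.1, by simp [hξ W hW Z hZ.1, LinearMap.mem_ker.1 hZ.2]⟩) with hker | hker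
  swap
  · exact fun Z hZ => (hker.ge hZ).2
  rcases hp (k.toSubmodule.map ξ) (Submodule.map_le_iff_le_comap.2 hξp) (by
      rintro W hW _ ⟨Z, hZ, rfl⟩
      exact ⟨⁅W, Z⁆, k.lie_mem hW hZ, hξ W hW Z hZ⟩) with him | him
  · exact fun Z hZ => (Submodule.mem_bot R).1 (him ▸ Submodule.mem_map_of_mem hZ)
  refine absurd ⟨ξ ∘ₗ k.toSubmodule.projection p hkp, ⟨fun Z hZ => ?_, fun Z hZ W hW hZW => ?_,
    fun P hP => ?_⟩, fun W hW Z hZ => ?_⟩ hnot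
  · simpa [Submodule.projection_apply_of_mem_left hkp hZ] using hξp Z hZ
  · simp only [LinearMap.comp_apply, Submodule.projection_apply_of_mem_left hkp hZ,
      Submodule.projection_apply_of_mem_left hkp hW] at hZW
    have : Z - W ∈ k.toSubmodule ⊓ LinearMap.ker ξ := ⟨k.sub_mem hZ hW, by simp [hZW]⟩
    exact sub_eq_zero.1 ((Submodule.mem_bot R).1 (hker ▸ this))
  · obtain ⟨Z, hZ, rfl⟩ := him.ge hP
    exact ⟨Z, hZ, by simp [Submodule.projection_apply_of_mem_left hkp hZ]⟩
  · simp [Submodule.projection_apply_of_mem_left hkp hZ,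
      Submodule.projection_apply_of_mem_left hkp (k.lie_mem hW hZ), hξ W hW Z hZ]

theorem AdIrreducible.mem_of_not_adIsomorphic {p : Submodule R L}
    (hk : k.AdIrreducible k.toSubmodule) (hp : k.AdIrreducible p) (hps : k.AdStable p)
    (hkp : IsCompl k.toSubmodule p) (hnot : ¬ k.AdIsomorphic k.toSubmodule p) {ξ : L →ₗ[R] L}
    (hξ : ∀ W ∈ k, ∀ Z ∈ k, ξ ⁅W, Z⁆ = ⁅W, ξ Z⁆) {Z : L} (hZ : Z ∈ k) : ξ Z ∈ k := by
  have := hk.eq_zero_of_not_adIsomorphic hp hkp hnot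
    (ξ := p.projection k.toSubmodule hkp.symm ∘ₗ ξ) (fun Z _ => p.projection_apply_mem _ _)
    (fun W hW Z hZ => by
      simp [hξ W hW Z hZ, hps.projection_lie k.adStable_toSubmodule hkp.symm hW])
  exact (p.projection_apply_eq_zero_iff hkp.symm).1 (this Z hZ)

end LieSubalgebra

open LieSubalgebra

theorem exists_pos_eq_smul_of_adIrreducible {L : Type*} [LieRing L] [LieAlgebra ℝ L]
    [FiniteDimensional ℝ L] {k : LieSubalgebra ℝ L} {V : Submodule ℝ L} (hVk : k.AdStable V)
    (hV : k.AdIrreducible V) {b : BilinForm ℝ L} (hb : b.IsSymm)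
    (hbV : ∀ P ∈ V, P ≠ 0 → b P P < 0) {T : Module.End ℝ L}
    (hTV : ∀ P ∈ V, T P ∈ V) (hTk : ∀ Z ∈ k, ∀ P ∈ V, T ⁅Z, P⁆ = ⁅Z, T P⁆)
    (hTb : ∀ P ∈ V, ∀ Q ∈ V, b (T P) Q = b P (T Q)) (hTpos : ∀ P ∈ V, P ≠ 0 → b (T P) P < 0) :
    ∃ t : ℝ, 0 < t ∧ ∀ P ∈ V, T P = t • P := by
  rcases subsingleton_or_nontrivial V with hV0 | hV0
  · exact ⟨1, one_pos, fun P hP => by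
      rw [show P = 0 from congrArg Subtype.val (Subsingleton.elim (⟨P, hP⟩ : V) 0)]; simp⟩
  obtain ⟨t, ht⟩ := LinearMap.IsSelfAdjoint.exists_hasEigenvalue (b := -b.restrict V)
    ⟨fun P Q => by simp [hb.eq P]⟩ (fun P hP => by simpa using hbV P P.2 (by simpa using hP))
    (T := T.restrict hTV) (fun P Q => by simp [hTb P P.2 Q Q.2])
  obtain ⟨⟨v, hvV⟩, hv⟩ := ht.exists_hasEigenvector
  have hTv : T v = t • v := congrArg Subtype.val hv.apply_eq_smul
  have hv0 : v ≠ 0 := by simpa using hv.2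
  let W : Submodule ℝ L := V ⊓ LinearMap.ker (T - t • 1)
  have hW : ∀ P, P ∈ W ↔ P ∈ V ∧ T P = t • P := fun P => by
    simp [W, sub_eq_zero]
  have hWstable : k.AdStable W := fun Z hZ P hP => by
    rw [hW] at hP ⊢
    exact ⟨hVk Z hZ P hP.1, by rw [hTk Z hZ P hP.1, hP.2, lie_smul]⟩
  have hvW : v ∈ W := (hW v).2 ⟨hvV, hTv⟩
  rcases hV W inf_le_left hWstable with hW0 | hWV
  · exact absurd ((Submodule.mem_bot ℝ).1 (hW0 ▸ hvW)) hv0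
  have ht : 0 < t := by
    have := hTpos v hvV hv0
    rw [hTv, map_smul, LinearMap.smul_apply, smul_eq_mul] at this
    exact pos_of_mul_neg_left this (hbV v hvV hv0).le
  exact ⟨t, ht, fun P hP => ((hW P).1 (hWV ▸ hP)).2⟩

section KillingOrthogonal

variable {L : Type*} [LieRing L] [LieAlgebra ℝ L] {k : LieSubalgebra ℝ L} {p : Submodule ℝ L}

theorem adStable_of_killing_orthogonal (hp : ∀ P, P ∈ p ↔ ∀ Z ∈ k, killingForm ℝ L P Z = 0) :
    k.AdStable p := by
  intro Z hZ P hP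
  rw [hp] at hP ⊢
  intro W hW
  rw [← lie_skew, map_neg, LinearMap.neg_apply, LieModule.traceForm_apply_lie_apply,
    hP _ (k.lie_mem hZ hW), neg_zero]

theorem killingForm_isSymm : (killingForm ℝ L).IsSymm :=
  LinearMap.BilinForm.isSymm_iff.2 (LieModule.traceForm_isSymm ℝ L L)

theorem isCompl_of_killing_orthogonal [Module.Finite ℝ L]
    (hB : ∀ a : L, a ≠ 0 → killingForm ℝ L a a < 0)
    (hp : ∀ P, P ∈ p ↔ ∀ Z ∈ k, killingForm ℝ L P Z = 0) : IsCompl k.toSubmodule p := by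
  have hsymm : (killingForm ℝ L).IsSymm := killingForm_isSymm
  have : p = (killingForm ℝ L).orthogonal k.toSubmodule := by
    ext P
    simp only [hp, LinearMap.BilinForm.mem_orthogonal_iff, hsymm.eq P]
    rfl
  rw [this, LinearMap.BilinForm.isCompl_orthogonal_iff_disjoint hsymm.isRefl,
    Submodule.disjoint_def]
  exact fun Z hZ hZ' => not_not.1 fun h => (hB Z h).ne (hZ' Z hZ)

theorem eq_zero_of_forall_lie_eq_zero (hB : ∀ a : L, a ≠ 0 → killingForm ℝ L a a < 0)
    (hp : k.AdIrreducible p) (hkp : IsCompl k.toSubmodule p) {P : L} (hP : P ∈ p)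
    (hPk : ∀ Z ∈ k, ⁅Z, P⁆ = 0) : P = 0 := by
  by_contra hP0
  have hspan : p = ℝ ∙ P := by
    refine ((hp (ℝ ∙ P) ((Submodule.span_singleton_le_iff_mem P p).2 hP) ?_).resolve_left
      ?_).symm
    · intro Z hZ Q hQ
      obtain ⟨c, rfl⟩ := Submodule.mem_span_singleton.1 hQ
      simp [hPk Z hZ]
    · simpa using hP0
  have hcentral : ∀ x : L, ⁅x, P⁆ = 0 := by
    intro x
    obtain ⟨Z, Q, hZ, hQ, rfl⟩ := Submodule.codisjoint_iff_exists_add_eq.1 hkp.codisjoint x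
    obtain ⟨c, rfl⟩ := Submodule.mem_span_singleton.1 (hspan ▸ hQ)
    simp [hPk Z hZ]
  have had : LieModule.toEnd ℝ L L P = 0 := by
    ext x
    rw [LieModule.toEnd_apply_apply, ← lie_skew, hcentral x, neg_zero, LinearMap.zero_apply]
  have := hB P hP0
  rw [LieModule.traceForm_apply_apply, had, LinearMap.zero_comp, map_zero] at this
  exact lt_irrefl 0 this

end KillingOrthogonal

section Product

variable {L : Type*} [LieRing L] [LieAlgebra ℝ L] {k : LieSubalgebra ℝ L} {p : Submodule ℝ L}
  {m : Submodule ℝ (L × L)} {A : (L × L) →ₗ[ℝ] L × L}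

def AdEquivariantOn (k : LieSubalgebra ℝ L) (m : Submodule ℝ (L × L)) (A : (L × L) →ₗ[ℝ] L × L) :
    Prop :=
  ∀ Z ∈ k, ∀ X ∈ m, A (⁅Z, X.1⁆, ⁅Z, X.2⁆) = (⁅Z, (A X).1⁆, ⁅Z, (A X).2⁆)

def KillingSymmOn (m : Submodule ℝ (L × L)) (A : (L × L) →ₗ[ℝ] L × L) : Prop :=
  ∀ X ∈ m, ∀ Y ∈ m, killingForm ℝ L (A X).1 Y.1 + killingForm ℝ L (A X).2 Y.2 =
    killingForm ℝ L X.1 (A Y).1 + killingForm ℝ L X.2 (A Y).2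

def KillingPosOn (m : Submodule ℝ (L × L)) (A : (L × L) →ₗ[ℝ] L × L) : Prop :=
  ∀ X ∈ m, X ≠ 0 → 0 < -(killingForm ℝ L (A X).1 X.1 + killingForm ℝ L (A X).2 X.2)

theorem mem_sup_iff_fst_add_snd_mem (hkp : IsCompl k.toSubmodule p)
    {m0 m1 m2 : Submodule ℝ (L × L)} (hm0 : ∀ X, X ∈ m0 ↔ ∃ Z ∈ k, X = (Z, -Z))
    (hm1 : ∀ X, X ∈ m1 ↔ X.1 ∈ p ∧ X.2 = 0) (hm2 : ∀ X, X ∈ m2 ↔ X.1 = 0 ∧ X.2 ∈ p) (X : L × L) :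
    X ∈ m0 ⊔ m1 ⊔ m2 ↔ X.1 + X.2 ∈ p := by
  constructor
  · intro hX
    obtain ⟨X01, hX01, X2, hX2, rfl⟩ := Submodule.mem_sup.1 hX
    obtain ⟨X0, hX0, X1, hX1, rfl⟩ := Submodule.mem_sup.1 hX01
    obtain ⟨Z, -, rfl⟩ := (hm0 X0).1 hX0
    obtain ⟨hX11, hX12⟩ := (hm1 X1).1 hX1
    obtain ⟨hX21, hX22⟩ := (hm2 X2).1 hX2
    convert p.add_mem hX11 hX22 using 1
    simp only [Prod.fst_add, Prod.snd_add, hX12, hX21]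
    abel
  · intro hX
    obtain ⟨Z, P, hZ, hP, hZP⟩ := Submodule.codisjoint_iff_exists_add_eq.1 hkp.codisjoint X.1
    have hX' : X = ((Z, -Z) + (P, 0)) + (0, X.1 + X.2 - P) := by
      ext
      · simp [← hZP]
      · simp [← hZP]; abel
    rw [hX']
    refine add_mem (add_mem ?_ ?_) (Submodule.mem_sup_right ((hm2 _).2 ⟨rfl, p.sub_mem hX hP⟩))
    · exact Submodule.mem_sup_left (Submodule.mem_sup_left ((hm0 _).2 ⟨Z, hZ, rfl⟩))
    · exact Submodule.mem_sup_left (Submodule.mem_sup_right ((hm1 _).2 ⟨hP, rfl⟩))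

theorem antidiag_mem (hm : ∀ X, X ∈ m ↔ X.1 + X.2 ∈ p) (Z : L) : (Z, -Z) ∈ m :=
  (hm _).2 (by simp)

theorem pair_mem (hm : ∀ X, X ∈ m ↔ X.1 + X.2 ∈ p) {P Q : L} (hP : P ∈ p) (hQ : Q ∈ p) :
    (P, Q) ∈ m :=
  (hm _).2 (p.add_mem hP hQ)

theorem apply_antidiag_lie (hm : ∀ X, X ∈ m ↔ X.1 + X.2 ∈ p)
    (hAequiv : AdEquivariantOn k m A)
    {W : L} (hW : W ∈ k) (Z : L) :
    A (⁅W, Z⁆, -⁅W, Z⁆) = (⁅W, (A (Z, -Z)).1⁆, ⁅W, (A (Z, -Z)).2⁆) := by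
  simpa using hAequiv W hW _ (antidiag_mem hm Z)

theorem apply_antidiag_eq_antidiag (hk : k.AdIrreducible k.toSubmodule) (hp : k.AdIrreducible p)
    (hps : k.AdStable p) (hkp : IsCompl k.toSubmodule p) (hnot : ¬ k.AdIsomorphic k.toSubmodule p)
    (hm : ∀ X, X ∈ m ↔ X.1 + X.2 ∈ p) (hAm : ∀ X ∈ m, A X ∈ m)
    (hAequiv : AdEquivariantOn k m A)
    {Z : L} (hZ : Z ∈ k) :
    (A (Z, -Z)).1 ∈ k ∧ A (Z, -Z) = ((A (Z, -Z)).1, -(A (Z, -Z)).1) := by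
  have h1 : (A (Z, -Z)).1 ∈ k := hk.mem_of_not_adIsomorphic hp hps hkp hnot
    (ξ := LinearMap.fst ℝ L L ∘ₗ A ∘ₗ LinearMap.id.prod (-LinearMap.id))
    (fun W hW Z _ => congrArg Prod.fst (apply_antidiag_lie hm hAequiv hW Z))
    hZ
  have h2 : (A (Z, -Z)).2 ∈ k := hk.mem_of_not_adIsomorphic hp hps hkp hnot
    (ξ := LinearMap.snd ℝ L L ∘ₗ A ∘ₗ LinearMap.id.prod (-LinearMap.id))
    (fun W hW Z _ => congrArg Prod.snd (apply_antidiag_lie hm hAequiv hW Z))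
    hZ
  have hsum : (A (Z, -Z)).1 + (A (Z, -Z)).2 = 0 := Submodule.disjoint_def.1 hkp.disjoint _
    (k.add_mem h1 h2) ((hm _).1 (hAm _ (antidiag_mem hm Z)))
  exact ⟨h1, Prod.ext rfl (eq_neg_of_add_eq_zero_right hsum)⟩

theorem exists_pos_apply_antidiag_eq_smul [FiniteDimensional ℝ L]
    (hB : ∀ a : L, a ≠ 0 → killingForm ℝ L a a < 0)
    (hk : k.AdIrreducible k.toSubmodule) (hp : k.AdIrreducible p)
    (hps : k.AdStable p) (hkp : IsCompl k.toSubmodule p) (hnot : ¬ k.AdIsomorphic k.toSubmodule p)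
    (hm : ∀ X, X ∈ m ↔ X.1 + X.2 ∈ p) (hAm : ∀ X ∈ m, A X ∈ m)
    (hAequiv : AdEquivariantOn k m A)
    (hAsymm : KillingSymmOn m A)
    (hApos : KillingPosOn m A) :
    ∃ c : ℝ, 0 < c ∧ ∀ Z ∈ k, A (Z, -Z) = c • (Z, -Z) := by
  set D := LinearMap.fst ℝ L L ∘ₗ A ∘ₗ LinearMap.id.prod (-LinearMap.id)
  have hD : ∀ Z ∈ k, D Z ∈ k ∧ A (Z, -Z) = (D Z, -D Z) := fun Z hZ =>
    apply_antidiag_eq_antidiag hk hp hps hkp hnot hm hAm hAequiv hZ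
  obtain ⟨c, hc, hDc⟩ := exists_pos_eq_smul_of_adIrreducible k.adStable_toSubmodule hk
    killingForm_isSymm (fun P _ => hB P) (T := D) (fun Z hZ => (hD Z hZ).1)
    (fun W hW Z _ => congrArg Prod.fst (apply_antidiag_lie hm hAequiv hW Z))
    (fun Z hZ W hW => by
      have := hAsymm _ (antidiag_mem hm Z) _ (antidiag_mem hm W)
      rw [(hD Z hZ).2, (hD W hW).2] at this
      simp only [map_neg, LinearMap.neg_apply, neg_neg] at this
      linarith)
    (fun Z hZ hZ0 => by
      have := hApos _ (antidiag_mem hm Z) (by simpa using hZ0)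
      rw [(hD Z hZ).2] at this
      simp only [map_neg, LinearMap.neg_apply, neg_neg] at this
      linarith)
  exact ⟨c, hc, fun Z hZ => by rw [(hD Z hZ).2, hDc Z hZ]; simp⟩

theorem apply_prod_mem (hp : ∀ P, P ∈ p ↔ ∀ Z ∈ k, killingForm ℝ L P Z = 0)
    (hm : ∀ X, X ∈ m ↔ X.1 + X.2 ∈ p) (hAm : ∀ X ∈ m, A X ∈ m)
    (hAsymm : KillingSymmOn m A)
    {c : ℝ} (hA0 : ∀ Z ∈ k, A (Z, -Z) = c • (Z, -Z)) {P Q : L} (hP : P ∈ p) (hQ : Q ∈ p) :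
    (A (P, Q)).1 ∈ p ∧ (A (P, Q)).2 ∈ p := by
  have hB : ∀ x y : L, killingForm ℝ L x y = killingForm ℝ L y x := killingForm_isSymm.eq
  have hsum := (hp _).1 ((hm _).1 (hAm _ (pair_mem hm hP hQ)))
  have heq : ∀ Z ∈ k, killingForm ℝ L (A (P, Q)).1 Z = killingForm ℝ L (A (P, Q)).2 Z := by
    intro Z hZ
    have := hAsymm _ (antidiag_mem hm Z) _ (pair_mem hm hP hQ)
    simp only [hA0 Z hZ, Prod.smul_fst, Prod.smul_snd, map_smul, map_neg, LinearMap.smul_apply,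
      LinearMap.neg_apply, hB _ P, hB _ Q, (hp P).1 hP Z hZ, (hp Q).1 hQ Z hZ, hB Z, smul_zero,
      neg_zero, add_zero] at this
    linarith
  have h1 : (A (P, Q)).1 ∈ p := (hp _).2 fun Z hZ => by
    have := hsum Z hZ
    rw [map_add, LinearMap.add_apply, ← heq Z hZ] at this
    linarith
  exact ⟨h1, (hp _).2 fun Z hZ => by rw [← heq Z hZ]; exact (hp _).1 h1 Z hZ⟩

theorem exists_pos_fst_apply_inl_eq_smul [FiniteDimensional ℝ L]
    (hB : ∀ a : L, a ≠ 0 → killingForm ℝ L a a < 0) (hp : k.AdIrreducible p) (hps : k.AdStable p)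
    (hm : ∀ X, X ∈ m ↔ X.1 + X.2 ∈ p)
    (hA_p : ∀ P ∈ p, ∀ Q ∈ p, (A (P, Q)).1 ∈ p ∧ (A (P, Q)).2 ∈ p)
    (hAequiv : AdEquivariantOn k m A)
    (hAsymm : KillingSymmOn m A)
    (hApos : KillingPosOn m A) :
    ∃ x : ℝ, 0 < x ∧ ∀ P ∈ p, (A (P, 0)).1 = x • P :=
  exists_pos_eq_smul_of_adIrreducible hps hp killingForm_isSymm (fun P _ => hB P)
    (T := LinearMap.fst ℝ L L ∘ₗ A ∘ₗ LinearMap.inl ℝ L L)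
    (fun P hP => (hA_p P hP 0 p.zero_mem).1)
    (fun Z hZ P hP => by
      simpa using congrArg Prod.fst (hAequiv Z hZ _ (pair_mem hm hP p.zero_mem)))
    (fun P hP Q hQ => by
      simpa using hAsymm _ (pair_mem hm hP p.zero_mem) _ (pair_mem hm hQ p.zero_mem))
    (fun P hP hP0 => by simpa using hApos _ (pair_mem hm hP p.zero_mem) (by simpa using hP0))

theorem exists_pos_snd_apply_inr_eq_smul [FiniteDimensional ℝ L]
    (hB : ∀ a : L, a ≠ 0 → killingForm ℝ L a a < 0) (hp : k.AdIrreducible p) (hps : k.AdStable p)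
    (hm : ∀ X, X ∈ m ↔ X.1 + X.2 ∈ p)
    (hA_p : ∀ P ∈ p, ∀ Q ∈ p, (A (P, Q)).1 ∈ p ∧ (A (P, Q)).2 ∈ p)
    (hAequiv : AdEquivariantOn k m A)
    (hAsymm : KillingSymmOn m A)
    (hApos : KillingPosOn m A) :
    ∃ y : ℝ, 0 < y ∧ ∀ Q ∈ p, (A (0, Q)).2 = y • Q :=
  exists_pos_eq_smul_of_adIrreducible hps hp killingForm_isSymm (fun Q _ => hB Q)
    (T := LinearMap.snd ℝ L L ∘ₗ A ∘ₗ LinearMap.inr ℝ L L)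
    (fun Q hQ => (hA_p 0 p.zero_mem Q hQ).2)
    (fun Z hZ Q hQ => by
      simpa using congrArg Prod.snd (hAequiv Z hZ _ (pair_mem hm p.zero_mem hQ)))
    (fun P hP Q hQ => by
      simpa using hAsymm _ (pair_mem hm p.zero_mem hP) _ (pair_mem hm p.zero_mem hQ))
    (fun Q hQ hQ0 => by simpa using hApos _ (pair_mem hm p.zero_mem hQ) (by simpa using hQ0))

theorem fst_apply_inr_eq_zero (hB : ∀ a : L, a ≠ 0 → killingForm ℝ L a a < 0)
    (hp : ∀ P, P ∈ p ↔ ∀ Z ∈ k, killingForm ℝ L P Z = 0) (hp_irr : k.AdIrreducible p)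
    (hkp : IsCompl k.toSubmodule p) (hm : ∀ X, X ∈ m ↔ X.1 + X.2 ∈ p)
    (hA_p : ∀ P ∈ p, ∀ Q ∈ p, (A (P, Q)).1 ∈ p ∧ (A (P, Q)).2 ∈ p)
    (hGO : ∀ X ∈ m, ∃ Z ∈ k, ⁅Z + X.1, (A X).1⁆ = 0 ∧ ⁅Z + X.2, (A X).2⁆ = 0)
    {x : ℝ} (hx : ∀ P ∈ p, (A (P, 0)).1 = x • P) {Q : L} (hQ : Q ∈ p) : (A (0, Q)).1 = 0 := by
  have hps := adStable_of_killing_orthogonal hp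
  set R := (A (0, Q)).1
  have hR : R ∈ p := (hA_p 0 p.zero_mem Q hQ).1
  refine eq_zero_of_forall_lie_eq_zero hB hp_irr hkp hR fun W hW => ?_
  rw [← lie_skew, neg_eq_zero]
  have hP : ⁅R, W⁆ ∈ p := by rw [← lie_skew]; exact p.neg_mem (hps W hW R hR)
  obtain ⟨Z, hZ, hGO1, -⟩ := hGO (⁅R, W⁆, Q) (pair_mem hm hP hQ)
  have hAPQ : (A (⁅R, W⁆, Q)).1 = x • ⁅R, W⁆ + R := by
    rw [show (⁅R, W⁆, Q) = (⁅R, W⁆, 0) + (0, Q) by simp, map_add, Prod.fst_add, hx _ hP]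
  dsimp only at hGO1
  rw [hAPQ, add_lie, lie_add ⁅R, W⁆, lie_smul, lie_self, smul_zero, zero_add] at hGO1
  refine not_not.1 fun h => (hB _ h).ne ?_
  rw [← LieModule.traceForm_apply_lie_apply, eq_neg_of_add_eq_zero_right hGO1, map_neg,
    LinearMap.neg_apply, (hp _).1 (hps Z hZ _ (p.add_mem (p.smul_mem x hP) hR)) W hW, neg_zero]

theorem snd_apply_inl_eq_zero (hB : ∀ a : L, a ≠ 0 → killingForm ℝ L a a < 0)
    (hm : ∀ X, X ∈ m ↔ X.1 + X.2 ∈ p)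
    (hA_p : ∀ P ∈ p, ∀ Q ∈ p, (A (P, Q)).1 ∈ p ∧ (A (P, Q)).2 ∈ p)
    (hAsymm : KillingSymmOn m A)
    (h12 : ∀ Q ∈ p, (A (0, Q)).1 = 0) {P : L} (hP : P ∈ p) : (A (P, 0)).2 = 0 := by
  set b := (A (P, 0)).2
  have hb : b ∈ p := (hA_p P hP 0 p.zero_mem).2
  have := hAsymm _ (pair_mem hm hP p.zero_mem) _ (pair_mem hm p.zero_mem hb)
  simp only [map_zero, LinearMap.zero_apply, h12 b hb, zero_add] at this
  exact not_not.1 fun h => (hB b h).ne this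

end Product

theorem statement12_general
    {g1 : Type*} [LieRing g1] [LieAlgebra ℝ g1] [Module.Finite ℝ g1]
    (hB1neg : ∀ a : g1, a ≠ 0 → killingForm ℝ g1 a a < 0)
    (k : LieSubalgebra ℝ g1)
    (hksimple : LieAlgebra.IsSimple ℝ k)
    (p1 : Submodule ℝ g1)
    (hp1 : ∀ P : g1, P ∈ p1 ↔ ∀ Z ∈ k, killingForm ℝ g1 P Z = 0)
    (hp1irr : ∀ W : Submodule ℝ g1, W ≤ p1 →
      (∀ Z ∈ k, ∀ P ∈ W, ⁅Z, P⁆ ∈ W) → W = ⊥ ∨ W = p1)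
    (hnotiso : ¬ ∃ θ : g1 →ₗ[ℝ] g1, Set.BijOn θ (k : Set g1) (p1 : Set g1) ∧
      ∀ Z ∈ k, ∀ W ∈ k, θ ⁅Z, W⁆ = ⁅Z, θ W⁆)
    (m0 m1 m2 m : Submodule ℝ (g1 × g1))
    (hm0 : ∀ p : g1 × g1, p ∈ m0 ↔ ∃ Z ∈ k, p = (Z, -Z))
    (hm1 : ∀ p : g1 × g1, p ∈ m1 ↔ p.1 ∈ p1 ∧ p.2 = 0)
    (hm2 : ∀ p : g1 × g1, p ∈ m2 ↔ p.1 = 0 ∧ p.2 ∈ p1)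
    (hm : m = m0 ⊔ m1 ⊔ m2)
    (A : (g1 × g1) →ₗ[ℝ] g1 × g1)
    (hAm : ∀ X ∈ m, A X ∈ m)
    (hAequiv : ∀ Z ∈ k, ∀ X ∈ m,
      A (⁅Z, X.1⁆, ⁅Z, X.2⁆) = (⁅Z, (A X).1⁆, ⁅Z, (A X).2⁆))
    (hAsymm : ∀ X ∈ m, ∀ Y ∈ m,
      killingForm ℝ g1 (A X).1 Y.1 + killingForm ℝ g1 (A X).2 Y.2 =
        killingForm ℝ g1 X.1 (A Y).1 + killingForm ℝ g1 X.2 (A Y).2)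
    (hApos : ∀ X ∈ m, X ≠ 0 →
      0 < -(killingForm ℝ g1 (A X).1 X.1 + killingForm ℝ g1 (A X).2 X.2))
    (hGO : ∀ X ∈ m, ∃ Z ∈ k, ⁅Z + X.1, (A X).1⁆ = 0 ∧ ⁅Z + X.2, (A X).2⁆ = 0) :
    ∃ c0 x y : ℝ, 0 < c0 ∧ 0 < x ∧ 0 < y ∧
      (∀ X ∈ m0, A X = c0 • X) ∧ (∀ X ∈ m1, A X = x • X) ∧ (∀ X ∈ m2, A X = y • X) := by
  have hps := adStable_of_killing_orthogonal hp1
  have hkp := isCompl_of_killing_orthogonal hB1neg hp1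
  have hk := k.adIrreducible_toSubmodule
  have hmp : ∀ X, X ∈ m ↔ X.1 + X.2 ∈ p1 :=
    hm ▸ mem_sup_iff_fst_add_snd_mem hkp hm0 hm1 hm2
  obtain ⟨c0, hc0, hA0⟩ := exists_pos_apply_antidiag_eq_smul hB1neg hk hp1irr hps hkp hnotiso
    hmp hAm hAequiv hAsymm hApos
  have hA_p : ∀ P ∈ p1, ∀ Q ∈ p1, (A (P, Q)).1 ∈ p1 ∧ (A (P, Q)).2 ∈ p1 := fun P hP Q hQ =>
    apply_prod_mem hp1 hmp hAm hAsymm hA0 hP hQ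
  obtain ⟨x, hx, hA11⟩ := exists_pos_fst_apply_inl_eq_smul hB1neg hp1irr hps hmp hA_p hAequiv
    hAsymm hApos
  obtain ⟨y, hy, hA22⟩ := exists_pos_snd_apply_inr_eq_smul hB1neg hp1irr hps hmp hA_p hAequiv
    hAsymm hApos
  have hA12 : ∀ Q ∈ p1, (A (0, Q)).1 = 0 := fun Q hQ =>
    fst_apply_inr_eq_zero hB1neg hp1 hp1irr hkp hmp hA_p hGO hA11 hQ
  have hA21 : ∀ P ∈ p1, (A (P, 0)).2 = 0 := fun P hP =>
    snd_apply_inl_eq_zero hB1neg hmp hA_p hAsymm hA12 hP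
  refine ⟨c0, x, y, hc0, hx, hy, fun X hX => ?_, fun X hX => ?_, fun X hX => ?_⟩
  · obtain ⟨Z, hZ, rfl⟩ := (hm0 X).1 hX
    exact hA0 Z hZ
  · obtain ⟨hX1, hX2⟩ := (hm1 X).1 hX
    rw [← Prod.mk.eta (p := X), hX2]
    exact Prod.ext (by simpa using hA11 _ hX1) (by simpa using hA21 _ hX1)
  · obtain ⟨hX1, hX2⟩ := (hm2 X).1 hX
    rw [← Prod.mk.eta (p := X), hX1]
    exact Prod.ext (by simpa using hA12 _ hX2) (by simpa using hA22 _ hX2)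

/-- Let `g1` be a finite-dimensional real semisimple Lie algebra with
negative definite Killing form, `k` a nonzero proper subalgebra which is simple, and
`p1 ≠ 0` its orthogonal complement, irreducible as an `ad(k)`-module and not isomorphic to
the adjoint module `k`.  In `g = g1 ⊕ g1` (brackets taken componentwise and
`B = B₁ ⊕ B₁`), with `h` the diagonal of `k`, `m0 = {(Z, −Z)}`, `m1 = p1 × 0`,
`m2 = 0 × p1`, `m = m0 ⊕ m1 ⊕ m2`: if `A : m → m` is `ad(h)`-equivariant, `B`-symmetric
and positive definite, and for every `X ∈ m` there is `Z ∈ h` with `⁅Z + X, A X⁆ = 0`,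
then `A` is diagonal: `A = c₀·id` on `m0`, `x·id` on `m1`, `y·id` on `m2` for some
positive reals `c₀, x, y`. -/
theorem statement12
    {g1 : Type*} [LieRing g1] [LieAlgebra ℝ g1] [Module.Finite ℝ g1]
    [LieAlgebra.IsSemisimple ℝ g1]
    (hB1neg : ∀ a : g1, a ≠ 0 → killingForm ℝ g1 a a < 0)
    (k : LieSubalgebra ℝ g1) (hkne : k ≠ ⊥) (hkprop : k ≠ ⊤)
    (hksimple : LieAlgebra.IsSimple ℝ k)
    (p1 : Submodule ℝ g1)
    (hp1 : ∀ P : g1, P ∈ p1 ↔ ∀ Z ∈ k, killingForm ℝ g1 P Z = 0)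
    (hp1ne : p1 ≠ ⊥)
    (hp1irr : ∀ W : Submodule ℝ g1, W ≤ p1 →
      (∀ Z ∈ k, ∀ P ∈ W, ⁅Z, P⁆ ∈ W) → W = ⊥ ∨ W = p1)
    (hnotiso : ¬ ∃ θ : g1 →ₗ[ℝ] g1, Set.BijOn θ (k : Set g1) (p1 : Set g1) ∧
      ∀ Z ∈ k, ∀ W ∈ k, θ ⁅Z, W⁆ = ⁅Z, θ W⁆)
    (m0 m1 m2 m : Submodule ℝ (g1 × g1))
    (hm0 : ∀ p : g1 × g1, p ∈ m0 ↔ ∃ Z ∈ k, p = (Z, -Z))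
    (hm1 : ∀ p : g1 × g1, p ∈ m1 ↔ p.1 ∈ p1 ∧ p.2 = 0)
    (hm2 : ∀ p : g1 × g1, p ∈ m2 ↔ p.1 = 0 ∧ p.2 ∈ p1)
    (hm : m = m0 ⊔ m1 ⊔ m2)
    (A : (g1 × g1) →ₗ[ℝ] g1 × g1)
    (hAm : ∀ X ∈ m, A X ∈ m)
    (hAequiv : ∀ Z ∈ k, ∀ X ∈ m,
      A (⁅Z, X.1⁆, ⁅Z, X.2⁆) = (⁅Z, (A X).1⁆, ⁅Z, (A X).2⁆))
    (hAsymm : ∀ X ∈ m, ∀ Y ∈ m,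
      killingForm ℝ g1 (A X).1 Y.1 + killingForm ℝ g1 (A X).2 Y.2 =
        killingForm ℝ g1 X.1 (A Y).1 + killingForm ℝ g1 X.2 (A Y).2)
    (hApos : ∀ X ∈ m, X ≠ 0 →
      0 < -(killingForm ℝ g1 (A X).1 X.1 + killingForm ℝ g1 (A X).2 X.2))
    (hGO : ∀ X ∈ m, ∃ Z ∈ k, ⁅Z + X.1, (A X).1⁆ = 0 ∧ ⁅Z + X.2, (A X).2⁆ = 0) :
    ∃ c0 x y : ℝ, 0 < c0 ∧ 0 < x ∧ 0 < y ∧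
      (∀ X ∈ m0, A X = c0 • X) ∧ (∀ X ∈ m1, A X = x • X) ∧ (∀ X ∈ m2, A X = y • X) :=
  statement12_general hB1neg k hksimple p1 hp1 hp1irr hnotiso m0 m1 m2 m hm0 hm1 hm2 hm A hAm
    hAequiv hAsymm hApos hGO
end

section
/- Fix reals x, y > 0 and let A : 𝔪 → 𝔪 be the linear map equal to the identity on 𝔪₀, to x·id on 𝔪₁ and to y·id on 𝔪₂. Assume ⁅𝔨, 𝔭₁⁆ ≠ 0. Then the following are equivalent: (a) for every X ∈ 𝔪 there exists Z̄ ∈ 𝔥 with ⁅Z̄ + X, A(X)⁆ ∈ 𝔥; (b) (1 − x)/x = (y − 1)/y. -/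
/-- In `g = g1 ⊕ g1` with `h = Δk`, `m0 = {(Z, −Z) : Z ∈ k}`,
`m1 = p1 × 0`, `m2 = 0 × p1`, fix `x, y > 0` and let `A` be `id` on `m0`, `x·id` on `m1`
and `y·id` on `m2`.  If `⁅k, p1⁆ ≠ 0`, the following are equivalent: (a) for every
`X ∈ m` there is `Z̄ ∈ h` with `⁅Z̄ + X, A X⁆ ∈ h`; (b) `(1 − x)/x = (y − 1)/y`.
(Elements of `m` are written `X = (Z + P, −Z + Q)` with `Z ∈ k`, `P, Q ∈ p1`, brackets in
`g1 ⊕ g1` are taken componentwise, and a pair lies in `h` iff its two components are equal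
and lie in `k`.) -/
theorem statement13
    {g1 : Type*} [LieRing g1] [LieAlgebra ℝ g1] [Module.Finite ℝ g1]
    [LieAlgebra.IsSemisimple ℝ g1]
    (hB1neg : ∀ a : g1, a ≠ 0 → killingForm ℝ g1 a a < 0)
    (k : LieSubalgebra ℝ g1) (hkne : k ≠ ⊥) (hkprop : k ≠ ⊤)
    (p1 : Submodule ℝ g1)
    (hp1 : ∀ P : g1, P ∈ p1 ↔ ∀ Z ∈ k, killingForm ℝ g1 P Z = 0)
    (x y : ℝ) (hx : 0 < x) (hy : 0 < y)
    (hne : ∃ Z ∈ k, ∃ P ∈ p1, ⁅Z, P⁆ ≠ 0) :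
    (∀ Z ∈ k, ∀ P ∈ p1, ∀ Q ∈ p1, ∃ W ∈ k,
        ⁅W + Z + P, Z + x • P⁆ = ⁅W + -Z + Q, -Z + y • Q⁆ ∧
        ⁅W + Z + P, Z + x • P⁆ ∈ k) ↔
      (1 - x) / x = (y - 1) / y := by
  -- [k, p1] ⊆ p1
  have hkp : ∀ Z ∈ k, ∀ P ∈ p1, ⁅Z, P⁆ ∈ p1 := by
    intro Z hZ P hP
    rw [hp1]
    intro W hW
    have h1 : killingForm ℝ g1 ⁅Z, P⁆ W = - killingForm ℝ g1 P ⁅Z, W⁆ := by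
      have h2 : ⁅Z, P⁆ = -⁅P, Z⁆ := (lie_skew Z P).symm
      rw [h2, map_neg, LinearMap.neg_apply, LieModule.traceForm_apply_lie_apply]
    rw [h1, (hp1 P).mp hP ⁅Z, W⁆ (k.lie_mem hZ hW), neg_zero]
  -- k ∩ p1 = 0
  have hcap : ∀ v : g1, v ∈ k → v ∈ p1 → v = 0 := by
    intro v hvk hvp
    by_contra hv
    have h1 := hB1neg v hv
    have h2 := (hp1 v).mp hvp v hvk
    rw [h2] at h1
    exact lt_irrefl 0 h1
  -- bracket expansions
  have e1 : ∀ W Z P : g1, ⁅W + Z + P, Z + x • P⁆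
      = ⁅W, Z⁆ + (x • ⁅W, P⁆ + (x - 1) • ⁅Z, P⁆) := by
    intro W Z P
    simp only [lie_add, add_lie, lie_smul, lie_self, ← lie_skew Z P]
    module
  have e2 : ∀ W Z Q : g1, ⁅W + -Z + Q, -Z + y • Q⁆
      = -⁅W, Z⁆ + (y • ⁅W, Q⁆ + (1 - y) • ⁅Z, Q⁆) := by
    intro W Z Q
    simp only [lie_add, add_lie, lie_smul, lie_self, neg_lie, lie_neg, ← lie_skew Z Q]
    module
  constructor
  · intro h
    obtain ⟨Z, hZ, P, hP, hZP⟩ := hne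
    obtain ⟨W, hW, heq, hmem⟩ := h Z hZ P hP P hP
    rw [e1] at hmem heq
    rw [e2] at heq
    have haP : ⁅W, P⁆ ∈ p1 := hkp W hW P hP
    have hbP : ⁅Z, P⁆ ∈ p1 := hkp Z hZ P hP
    -- first component p-part
    have hm1 : x • ⁅W, P⁆ + (x - 1) • ⁅Z, P⁆ = 0 := by
      apply hcap
      · have := k.sub_mem hmem (k.lie_mem hW hZ)
        simpa using this
      · exact p1.add_mem (p1.smul_mem _ haP) (p1.smul_mem _ hbP)
    have hm2 : y • ⁅W, P⁆ + (1 - y) • ⁅Z, P⁆ = 0 := by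
      apply hcap
      · have h3 : -⁅W, Z⁆ + (y • ⁅W, P⁆ + (1 - y) • ⁅Z, P⁆) ∈ k := heq ▸ hmem
        have h4 := k.add_mem (k.lie_mem hW hZ) h3
        rwa [add_neg_cancel_left] at h4
      · exact p1.add_mem (p1.smul_mem _ haP) (p1.smul_mem _ hbP)
    -- extract scalar relation
    have hWP1 : ⁅W, P⁆ = ((1 - x) / x) • ⁅Z, P⁆ := by
      have hx0 : x ≠ 0 := ne_of_gt hx
      have : x • ⁅W, P⁆ = (1 - x) • ⁅Z, P⁆ := by
        have := hm1; rw [add_eq_zero_iff_eq_neg] at this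
        rw [this]; module
      calc ⁅W, P⁆ = x⁻¹ • (x • ⁅W, P⁆) := by rw [smul_smul, inv_mul_cancel₀ hx0, one_smul]
        _ = ((1 - x) / x) • ⁅Z, P⁆ := by rw [this, smul_smul]; ring_nf
    have hWP2 : ⁅W, P⁆ = ((y - 1) / y) • ⁅Z, P⁆ := by
      have hy0 : y ≠ 0 := ne_of_gt hy
      have : y • ⁅W, P⁆ = (y - 1) • ⁅Z, P⁆ := by
        have := hm2; rw [add_eq_zero_iff_eq_neg] at this
        rw [this]; module
      calc ⁅W, P⁆ = y⁻¹ • (y • ⁅W, P⁆) := by rw [smul_smul, inv_mul_cancel₀ hy0, one_smul]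
        _ = ((y - 1) / y) • ⁅Z, P⁆ := by rw [this, smul_smul]; ring_nf
    have : ((1 - x) / x - (y - 1) / y) • ⁅Z, P⁆ = 0 := by
      rw [sub_smul, ← hWP1, ← hWP2, sub_self]
    rcases smul_eq_zero.mp this with h0 | h0
    · linarith [sub_eq_zero.mp (by linarith [h0] : (1 - x) / x - (y - 1) / y = 0)]
    · exact absurd h0 hZP
  · intro hxy Z hZ P hP Q hQ
    refine ⟨((1 - x) / x) • Z, k.smul_mem _ hZ, ?_, ?_⟩
    · rw [e1, e2]
      have hWZ : ⁅((1 - x) / x) • Z, Z⁆ = 0 := by simp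
      have hWP : x • ⁅((1 - x) / x) • Z, P⁆ + (x - 1) • ⁅Z, P⁆ = 0 := by
        rw [smul_lie, smul_smul, show x * ((1 - x) / x) = 1 - x by field_simp]
        module
      have hWQ : y • ⁅((1 - x) / x) • Z, Q⁆ + (1 - y) • ⁅Z, Q⁆ = 0 := by
        rw [smul_lie, smul_smul, hxy, show y * ((y - 1) / y) = y - 1 by field_simp]
        module
      rw [hWZ, hWP, hWQ, neg_zero]
    · rw [e1]
      have hWP : x • ⁅((1 - x) / x) • Z, P⁆ + (x - 1) • ⁅Z, P⁆ = 0 := by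
        rw [smul_lie, smul_smul, show x * ((1 - x) / x) = 1 - x by field_simp]
        module
      rw [hWP, add_zero]
      exact k.lie_mem (k.smul_mem _ hZ) hZ
end

section
/- Let (V, ⟨·,·⟩) be a finite-dimensional real inner product space and let S be a set of endomorphisms of V that pairwise commute and are each skew-adjoint (⟨T u, v⟩ = −⟨u, T v⟩ for all u, v ∈ V, T ∈ S). Then there exists a direct sum decomposition V = V₀ ⊕ V₁ ⊕ ⋯ ⊕ V_s into subspaces each invariant under every T ∈ S, such that T(V₀) = 0 for every T ∈ S and dim V_i = 2 for every i = 1, …, s. -/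
/-!
A minimal nonzero subspace `W` invariant under `S` is either annihilated by `S` or a plane.
For `T₀, T ∈ S` the product `T₀ T` is symmetric and commutes with `S`, so it acts on `W` as a
scalar `c_T`: an eigenspace of it meets `W` in a nonzero invariant subspace. If `T₀ v₀ ≠ 0`,
then `T₀² = μ ≠ 0` on `W`, hence `T v₀ = (c_T / μ) • T₀ v₀` and `T (T₀ v₀) = c_T • v₀`, so the
plane spanned by the orthogonal vectors `v₀, T₀ v₀` is invariant and equals `W`.
Orthogonal complements of invariant subspaces are invariant under skew maps, so the orthogonal
complement of the common kernel `K` of `S` splits off such planes one at a time.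
-/

open Function Module Submodule RealInnerProductSpace

theorem Fin.iSup_cons {α : Type*} [CompleteLattice α] {n : ℕ} (a : α) (f : Fin n → α) :
    ⨆ i, (Fin.cons a f : Fin (n + 1) → α) i = a ⊔ ⨆ i, f i := by
  rw [← sSup_range, Fin.range_cons, sSup_insert, sSup_range]

theorem Submodule.pairwise_isOrtho_cons {𝕜 E : Type*} [RCLike 𝕜] [NormedAddCommGroup E]
    [InnerProductSpace 𝕜 E] {n : ℕ} {A : Submodule 𝕜 E} {B : Fin n → Submodule 𝕜 E}
    (hB : Pairwise ((· ⟂ ·) on B)) (hA : A ⟂ ⨆ i, B i) :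
    Pairwise ((· ⟂ ·) on (Fin.cons A B : Fin (n + 1) → Submodule 𝕜 E)) :=
  pairwise_fin_succ_iff.mpr
    ⟨fun i => (hA.mono_right (le_iSup B i)).symm, fun i => hA.mono_right (le_iSup B i), hB⟩

section

variable {R M : Type*} [Semiring R] [AddCommMonoid M] [Module R M]

def Submodule.IsInvariantUnder (S : Set (Module.End R M)) (W : Submodule R M) : Prop :=
  ∀ T ∈ S, ∀ v ∈ W, T v ∈ W

theorem Submodule.IsInvariantUnder.inf {S : Set (Module.End R M)} {W W' : Submodule R M}
    (hW : W.IsInvariantUnder S) (hW' : W'.IsInvariantUnder S) : (W ⊓ W').IsInvariantUnder S :=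
  fun T hT v hv => ⟨hW T hT v hv.1, hW' T hT v hv.2⟩

end

section RCLike

open scoped InnerProductSpace

variable {𝕜 E : Type*} [RCLike 𝕜] [NormedAddCommGroup E] [InnerProductSpace 𝕜 E]

theorem Submodule.IsInvariantUnder.orthogonal {S : Set (Module.End 𝕜 E)}
    (hskew : ∀ T ∈ S, ∀ u v : E, ⟪T u, v⟫_𝕜 = -⟪u, T v⟫_𝕜) {W : Submodule 𝕜 E}
    (hW : W.IsInvariantUnder S) : Wᗮ.IsInvariantUnder S := by
  intro T hT v hv u hu
  rw [← neg_eq_zero, ← hskew T hT]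
  exact hv _ (hW T hT u hu)

theorem LinearMap.isSymmetric_mul_of_skew {T T' : Module.End 𝕜 E}
    (hT : ∀ u v : E, ⟪T u, v⟫_𝕜 = -⟪u, T v⟫_𝕜) (hT' : ∀ u v : E, ⟪T' u, v⟫_𝕜 = -⟪u, T' v⟫_𝕜)
    (hcomm : Commute T T') : (T * T').IsSymmetric := by
  intro u v
  calc ⟪T (T' u), v⟫_𝕜 = ⟪u, T' (T v)⟫_𝕜 := by rw [hT, hT', neg_neg]
    _ = ⟪u, T (T' v)⟫_𝕜 := by rw [← Module.End.mul_apply, ← hcomm.eq, Module.End.mul_apply]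

theorem eq_smul_of_minimal_of_isSymmetric [FiniteDimensional 𝕜 E] {S : Set (Module.End 𝕜 E)}
    {W : Submodule 𝕜 E} (hW : Minimal (fun W : Submodule 𝕜 E => W ≠ ⊥ ∧ W.IsInvariantUnder S) W)
    {A : Module.End 𝕜 E} (hA : A.IsSymmetric) (hAS : ∀ T ∈ S, Commute A T)
    (hAW : ∀ v ∈ W, A v ∈ W) : ∃ μ : 𝕜, ∀ v ∈ W, A v = μ • v := by
  have : Nontrivial W := nontrivial_iff_ne_bot.mpr hW.prop.1
  obtain ⟨μ, hμ⟩ : ∃ μ, Module.End.HasEigenvalue (A.restrict hAW) μ :=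
    ⟨_, (hA.restrict_invariant hAW).hasEigenvalue_iSup_of_finiteDimensional⟩
  have hE : (A.eigenspace μ ⊓ W).IsInvariantUnder S :=
    IsInvariantUnder.inf
      (fun T hT _ hv => Module.End.mapsTo_genEigenspace_of_comm (hAS T hT) μ 1 hv) hW.prop.2
  have hE0 : A.eigenspace μ ⊓ W ≠ ⊥ := fun h =>
    hμ (Module.End.eigenspace_restrict_eq_bot hAW (disjoint_iff.mpr h))
  refine ⟨μ, fun v hv => Module.End.mem_eigenspace_iff.mp ?_⟩
  exact (hW.le_of_le ⟨hE0, hE⟩ inf_le_right hv).1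

end RCLike

section Real

variable {V : Type*} [NormedAddCommGroup V] [InnerProductSpace ℝ V] [FiniteDimensional ℝ V]

theorem finrank_eq_two_of_minimal {S : Set (Module.End ℝ V)}
    (hcomm : ∀ T ∈ S, ∀ T' ∈ S, Commute T T')
    (hskew : ∀ T ∈ S, ∀ u v : V, ⟪T u, v⟫ = -⟪u, T v⟫) {W : Submodule ℝ V}
    (hW : Minimal (fun W : Submodule ℝ V => W ≠ ⊥ ∧ W.IsInvariantUnder S) W)
    {T₀ : Module.End ℝ V} (hT₀ : T₀ ∈ S) {v₀ : V} (hv₀ : v₀ ∈ W) (hTv₀ : T₀ v₀ ≠ 0) :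
    finrank ℝ W = 2 := by
  have scalar : ∀ T ∈ S, ∃ c : ℝ, ∀ v ∈ W, T₀ (T v) = c • v := fun T hT =>
    eq_smul_of_minimal_of_isSymmetric hW
      (LinearMap.isSymmetric_mul_of_skew (hskew T₀ hT₀) (hskew T hT) (hcomm T₀ hT₀ T hT))
      (fun T' hT' => (hcomm T₀ hT₀ T' hT').mul_left (hcomm T hT T' hT'))
      (fun v hv => hW.prop.2 T₀ hT₀ _ (hW.prop.2 T hT v hv))
  obtain ⟨μ, hμ⟩ := scalar T₀ hT₀
  have hμ0 : μ ≠ 0 := by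
    rintro rfl
    apply hTv₀
    rw [← inner_self_eq_zero (𝕜 := ℝ), hskew T₀ hT₀, hμ v₀ hv₀, zero_smul, inner_zero_right,
      neg_zero]
  have hv₀0 : v₀ ≠ 0 := by rintro rfl; exact hTv₀ (map_zero T₀)
  have horth : ⟪v₀, T₀ v₀⟫ = 0 := by
    have := hskew T₀ hT₀ v₀ v₀
    rw [real_inner_comm] at this
    linarith
  set P : Submodule ℝ V := span ℝ (Set.range ![v₀, T₀ v₀])
  have hv₀P : v₀ ∈ P := subset_span ⟨0, rfl⟩
  have hTv₀P : T₀ v₀ ∈ P := subset_span ⟨1, rfl⟩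
  have hPW : P ≤ W := span_le.mpr <| Set.range_subset_iff.mpr <|
    Fin.forall_fin_two.mpr ⟨hv₀, hW.prop.2 T₀ hT₀ v₀ hv₀⟩
  have hPinv : P.IsInvariantUnder S := by
    intro T hT
    obtain ⟨c, hc⟩ := scalar T hT
    have hμTv₀ : μ • T v₀ = c • T₀ v₀ := by
      rw [← hμ _ (hW.prop.2 T hT v₀ hv₀), hc v₀ hv₀, map_smul]
    have hTTv₀ : T (T₀ v₀) = c • v₀ := by
      rw [← hc v₀ hv₀, ← Module.End.mul_apply, (hcomm T hT T₀ hT₀).eq, Module.End.mul_apply]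
    suffices P ≤ P.comap T from fun v hv => this hv
    refine span_le.mpr (Set.range_subset_iff.mpr (Fin.forall_fin_two.mpr ⟨?_, ?_⟩))
    · have : T v₀ = μ⁻¹ • c • T₀ v₀ := by rw [← hμTv₀, inv_smul_smul₀ hμ0]
      show T v₀ ∈ P
      rw [this]
      exact P.smul_mem _ (P.smul_mem _ hTv₀P)
    · show T (T₀ v₀) ∈ P
      rw [hTTv₀]
      exact P.smul_mem _ hv₀P
  have hPeq : P = W := hW.eq_of_le ⟨(Submodule.ne_bot_iff P).mpr ⟨v₀, hv₀P, hv₀0⟩, hPinv⟩ hPW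
  have hli : LinearIndependent ℝ ![v₀, T₀ v₀] := by
    refine linearIndependent_of_ne_zero_of_inner_eq_zero
      (Fin.forall_fin_two.mpr ⟨hv₀0, hTv₀⟩) ?_
    intro i j hij
    fin_cases i <;> fin_cases j <;>
      first | exact absurd rfl hij | simpa [inner_eq_zero_symm] using horth
  rw [← hPeq, finrank_span_eq_card hli, Fintype.card_fin]

theorem exists_pairwise_isOrtho_invariant_planes {S : Set (Module.End ℝ V)}
    (hcomm : ∀ T ∈ S, ∀ T' ∈ S, Commute T T')
    (hskew : ∀ T ∈ S, ∀ u v : V, ⟪T u, v⟫ = -⟪u, T v⟫) (U : Submodule ℝ V)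
    (hU : U.IsInvariantUnder S) (hfree : ∀ v ∈ U, (∀ T ∈ S, T v = 0) → v = 0) :
    ∃ (n : ℕ) (B : Fin n → Submodule ℝ V), Pairwise ((· ⟂ ·) on B) ∧ ⨆ i, B i = U ∧
      (∀ i, (B i).IsInvariantUnder S) ∧ ∀ i, finrank ℝ (B i) = 2 := by
  induction U using WellFoundedLT.induction with | ind U ih =>
  rcases eq_or_ne U ⊥ with rfl | hU0
  · exact ⟨0, Fin.elim0, fun i => i.elim0, iSup_of_empty _, fun i => i.elim0, fun i => i.elim0⟩
  obtain ⟨W, hWU, hW⟩ := exists_minimal_le_of_wellFoundedLT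
    (fun W : Submodule ℝ V => W ≠ ⊥ ∧ W.IsInvariantUnder S) U ⟨hU0, hU⟩
  obtain ⟨T, hT, w, hw, hTw⟩ : ∃ T ∈ S, ∃ w ∈ W, T w ≠ 0 := by
    by_contra! h
    obtain ⟨w, hw, hw0⟩ := (Submodule.ne_bot_iff W).mp hW.prop.1
    exact hw0 (hfree w (hWU hw) fun T hT => h T hT w hw)
  set U' := Wᗮ ⊓ U
  have hU'U : U' < U := by
    refine lt_of_le_of_ne inf_le_right fun h => hW.prop.1 ?_
    rw [← Submodule.inf_orthogonal_eq_bot W, eq_comm, inf_eq_left]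
    exact hWU.trans (h ▸ inf_le_left)
  obtain ⟨n, B, hBortho, hBsup, hBinv, hBrank⟩ :=
    ih U' hU'U ((hW.prop.2.orthogonal hskew).inf hU) fun v hv => hfree v hv.2
  refine ⟨n + 1, Fin.cons W B, pairwise_isOrtho_cons hBortho ?_, ?_, ?_, ?_⟩
  · exact (isOrtho_orthogonal_right W).mono_right (hBsup ▸ inf_le_left)
  · rw [Fin.iSup_cons, hBsup, sup_orthogonal_inf_of_hasOrthogonalProjection hWU]
  · exact Fin.forall_fin_succ.mpr ⟨hW.prop.2, hBinv⟩
  · exact Fin.forall_fin_succ.mpr ⟨finrank_eq_two_of_minimal hcomm hskew hW hT hw hTw, hBrank⟩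

end Real

/-- Let `(V, ⟪·,·⟫)` be a finite-dimensional real inner product space and
`S` a set of pairwise commuting skew-adjoint endomorphisms of `V`.  Then `V` decomposes as
a direct sum `V = V₀ ⊕ V₁ ⊕ ⋯ ⊕ V_s` of subspaces invariant under every `T ∈ S`, with
`T(V₀) = 0` for all `T ∈ S` and `dim V_i = 2` for `i = 1, …, s`. -/
theorem statement14
    {V : Type*} [NormedAddCommGroup V] [InnerProductSpace ℝ V] [FiniteDimensional ℝ V]
    (S : Set (V →ₗ[ℝ] V))
    (hcomm : ∀ T ∈ S, ∀ T' ∈ S, T ∘ₗ T' = T' ∘ₗ T)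
    (hskew : ∀ T ∈ S, ∀ u v : V, ⟪T u, v⟫ = -⟪u, T v⟫) :
    ∃ (s : ℕ) (W : Fin (s + 1) → Submodule ℝ V),
      iSupIndep W ∧ (⨆ i, W i) = ⊤ ∧
      (∀ T ∈ S, ∀ i, ∀ v ∈ W i, T v ∈ W i) ∧
      (∀ T ∈ S, ∀ v ∈ W 0, T v = 0) ∧
      (∀ i : Fin (s + 1), i ≠ 0 → Module.finrank ℝ (W i) = 2) := by
  set K : Submodule ℝ V := ⨅ T ∈ S, LinearMap.ker T
  have hK : ∀ T ∈ S, ∀ v ∈ K, T v = 0 := fun T hT v hv =>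
    (mem_iInf _).mp ((mem_iInf _).mp hv T) hT
  have hKinv : K.IsInvariantUnder S := fun T hT v hv => hK T hT v hv ▸ K.zero_mem
  have hKfree : ∀ v ∈ Kᗮ, (∀ T ∈ S, T v = 0) → v = 0 := fun v hv hSv =>
    have hvK : v ∈ K := (mem_iInf _).mpr fun T => (mem_iInf _).mpr (hSv T)
    (Submodule.mem_bot ℝ).mp (K.inf_orthogonal_eq_bot ▸ ⟨hvK, hv⟩)
  obtain ⟨s, B, hBortho, hBsup, hBinv, hBrank⟩ :=
    exists_pairwise_isOrtho_invariant_planes hcomm hskew Kᗮ (hKinv.orthogonal hskew) hKfree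
  have hortho := pairwise_isOrtho_cons hBortho (hBsup ▸ isOrtho_orthogonal_right K)
  refine ⟨s, Fin.cons K B, (OrthogonalFamily.of_pairwise hortho).independent, ?_, ?_, hK, ?_⟩
  · rw [Fin.iSup_cons, hBsup, sup_orthogonal_of_hasOrthogonalProjection]
  · exact fun T hT => Fin.forall_fin_succ.mpr ⟨hKinv T hT, fun i => hBinv i T hT⟩
  · exact Fin.forall_fin_succ.mpr ⟨fun h => absurd rfl h, fun i _ => hBrank i⟩
end
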